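/- arXiv:1202.0371 — 15 statements merged into one kernel-verified Lean document; each statement's English description precedes it below -/
import Mathlib

section
/- Let R be a commutative ring with identity. If every prime ideal of R is a direct sum of cyclic R-modules, then for each prime ideal P of R, the quotient ring R/P is a principal ideal domain. -/
/-- An ideal `P` of a commutative ring `R` is an internal direct sum of cyclic
`R`-modules: there is a family of elements of `P` whose cyclic spans are
independent and whose supremum is `P`. -/
def IsDirectSumOfCyclics {R : Type} [CommRing R] (P : Ideal R) : Prop :=
  ∃ (ι : Type) (w : ι → R), (∀ i, w i ∈ P) ∧
    iSupIndep (fun i => Ideal.span {w i}) ∧ (⨆ i, Ideal.span {w i}) = P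

theorem quotient_by_prime_is_PID
    {R : Type} [CommRing R]
    (h : ∀ P : Ideal R, P.IsPrime → IsDirectSumOfCyclics P)
    (P : Ideal R) (hP : P.IsPrime) :
    IsPrincipalIdealRing (R ⧸ P) ∧ IsDomain (R ⧸ P) := by
  have hdom : IsDomain (R ⧸ P) := Ideal.Quotient.isDomain P
  refine ⟨?_, hdom⟩
  apply IsPrincipalIdealRing.of_prime
  intro J hJ
  set f := Ideal.Quotient.mk P
  have hsurj : Function.Surjective f := Ideal.Quotient.mk_surjective
  set Q := Ideal.comap f J with hQdef
  have hQprime : Q.IsPrime := Ideal.IsPrime.comap f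
  have hmapQ : Ideal.map f Q = J := Ideal.map_comap_of_surjective f hsurj J
  obtain ⟨ι, w, hwQ, hindep, hsup⟩ := h Q hQprime
  -- for i ≠ j, w i * w j = 0
  have hzero : ∀ i j, i ≠ j → w i * w j = 0 := by
    intro i j hij
    have h1 : w i * w j ∈ Ideal.span {w i} :=
      Ideal.mul_mem_right _ _ (Ideal.subset_span rfl)
    have h2 : w i * w j ∈ ⨆ k, ⨆ _ : k ≠ i, Ideal.span {w k} := by
      have : w i * w j ∈ Ideal.span {w j} :=
        Ideal.mul_mem_left _ _ (Ideal.subset_span rfl)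
      exact (le_iSup₂ (f := fun k _ => Ideal.span {w k}) j hij.symm) this
    have := (hindep i).le_bot ⟨h1, h2⟩
    simpa using this
  -- at most one i with w i ∉ P
  have hkey : ∀ i j, i ≠ j → w i ∈ P ∨ w j ∈ P := by
    intro i j hij
    exact hP.mem_or_mem (by rw [hzero i j hij]; exact P.zero_mem)
  have hmapsup : J = ⨆ i, Ideal.span {f (w i)} := by
    rw [← hmapQ, ← hsup, Ideal.map_iSup]
    congr 1; funext i
    rw [Ideal.map_span, Set.image_singleton]
  by_cases hex : ∃ i, w i ∉ P
  · obtain ⟨i0, hi0⟩ := hex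
    refine ⟨f (w i0), ?_⟩
    rw [hmapsup]
    apply le_antisymm
    · apply iSup_le
      intro i
      by_cases hi : i = i0
      · subst hi; exact le_rfl
      · have hiP : w i ∈ P := by
          rcases hkey i i0 hi with h' | h'
          · exact h'
          · exact absurd h' hi0
        have : f (w i) = 0 := Ideal.Quotient.eq_zero_iff_mem.mpr hiP
        rw [Ideal.span_singleton_eq_bot.mpr this]
        exact bot_le
    · exact le_iSup (fun i => Ideal.span {f (w i)}) i0
  · push_neg at hex
    refine ⟨0, ?_⟩
    rw [hmapsup, Submodule.span_zero_singleton, eq_bot_iff]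
    apply iSup_le
    intro i
    rw [Ideal.span_singleton_eq_bot.mpr (Ideal.Quotient.eq_zero_iff_mem.mpr (hex i))]
end

section
/- Let R be a commutative ring with identity. If every prime ideal of R is a direct sum of cyclic R-modules, then the Krull dimension of R is at most 1. -/
open Ideal

variable {R : Type} [CommRing R]

lemma mul_eq_zero_of_iSupIndep_span_singleton {ι : Type*} {w : ι → R}
    (hw : iSupIndep fun i => span {w i}) {i j : ι} (hij : i ≠ j) : w i * w j = 0 :=
  (Submodule.disjoint_def.mp (hw.pairwiseDisjoint hij)) _
    (mul_mem_right _ _ (mem_span_singleton_self _)) (mul_mem_left _ _ (mem_span_singleton_self _))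

lemma IsDirectSumOfCyclics.exists_le_sup_span_singleton {P Q : Ideal R} [Q.IsPrime]
    (hP : IsDirectSumOfCyclics P) (hPQ : ¬P ≤ Q) : ∃ w ∈ P, P ≤ Q ⊔ span {w} := by
  obtain ⟨ι, w, hwP, hw, rfl⟩ := hP
  obtain ⟨i, hi⟩ : ∃ i, w i ∉ Q := by
    by_contra! h
    exact hPQ (iSup_le fun i => (span_singleton_le_iff_mem _).mpr (h i))
  refine ⟨w i, hwP i, iSup_le fun j => ?_⟩
  rcases eq_or_ne j i with rfl | hji
  · exact le_sup_right
  · have hwj : w j ∈ Q := by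
      refine (IsPrime.mem_or_mem ‹_› ?_).resolve_left hi
      rw [mul_eq_zero_of_iSupIndep_span_singleton hw hji.symm]
      exact Q.zero_mem
    exact ((span_singleton_le_iff_mem _).mpr hwj).trans le_sup_left

lemma Ideal.le_of_le_sup_span_singleton_of_lt {Q' Q P : Ideal R} [Q'.IsPrime] [Q.IsPrime]
    (hP : P ≠ ⊤) (hQ'Q : Q' ≤ Q) (hQP : Q < P) {v w : R}
    (hv : v ∈ Q) (hQv : Q ≤ Q' ⊔ span {v}) (hw : w ∈ P) (hPw : P ≤ Q' ⊔ span {w}) :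
    Q ≤ Q' := by
  have hwQ : w ∉ Q := fun hwQ =>
    hQP.not_ge (hPw.trans (sup_le hQ'Q ((span_singleton_le_iff_mem _).mpr hwQ)))
  obtain ⟨a, ha, _, hrw, hvar⟩ := Submodule.mem_sup.mp (hPw (hQP.le hv))
  obtain ⟨r, rfl⟩ := mem_span_singleton'.mp hrw
  have hr : r ∈ Q := by
    refine (IsPrime.mem_or_mem ‹_› ?_).resolve_right hwQ
    rw [show r * w = v - a by rw [← hvar]; ring]
    exact Q.sub_mem hv (hQ'Q ha)
  obtain ⟨b, hb, _, hsv, hbsv⟩ := Submodule.mem_sup.mp (hQv hr)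
  obtain ⟨s, rfl⟩ := mem_span_singleton'.mp hsv
  have hkey : (1 - s * w) * v ∈ Q' := by
    rw [show (1 - s * w) * v = a + b * w by linear_combination -hvar - w * hbsv]
    exact Q'.add_mem ha (mul_mem_right _ _ hb)
  have hsw : 1 - s * w ∉ Q' := fun h1 =>
    hP ((eq_top_iff_one _).mpr <| by
      simpa using P.add_mem (hQ'Q.trans hQP.le h1) (P.mul_mem_left s hw))
  have hvQ' : v ∈ Q' := (IsPrime.mem_or_mem ‹_› hkey).resolve_left hsw
  exact hQv.trans (sup_le le_rfl ((span_singleton_le_iff_mem _).mpr hvQ'))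

theorem krullDim_le_one_of_primes_direct_sum_of_cyclics
    {R : Type} [CommRing R]
    (h : ∀ P : Ideal R, P.IsPrime → IsDirectSumOfCyclics P) :
    ringKrullDim R ≤ 1 := by
  refine Order.krullDim_le_one_iff.mpr fun Q => ?_
  by_contra! hQ
  obtain ⟨Q', hQ'Q : Q'.asIdeal < Q.asIdeal⟩ := not_isMin_iff.mp hQ.1
  obtain ⟨P, hQP : Q.asIdeal < P.asIdeal⟩ := not_isMax_iff.mp hQ.2
  obtain ⟨w, hw, hPw⟩ := (h _ P.isPrime).exists_le_sup_span_singleton (Q := Q'.asIdeal)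
    (hQ'Q.trans hQP).not_ge
  obtain ⟨v, hv, hQv⟩ := (h _ Q.isPrime).exists_le_sup_span_singleton hQ'Q.not_ge
  exact hQ'Q.not_ge <|
    le_of_le_sup_span_singleton_of_lt P.isPrime.ne_top hQ'Q.le hQP hv hQv hw hPw
end

section
/- Let R be a commutative semilocal ring (finitely many maximal ideals) such that every prime ideal of R is a direct sum of cyclic R-modules. Then R is a principal ideal ring if and only if every maximal ideal of R is principal. -/
theorem principal_ideal_ring_iff_maximals_principal
    {R : Type} [CommRing R]
    (hsemi : {I : Ideal R | I.IsMaximal}.Finite)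
    (h : ∀ P : Ideal R, P.IsPrime → IsDirectSumOfCyclics P) :
    IsPrincipalIdealRing R ↔ ∀ M : Ideal R, M.IsMaximal → M.IsPrincipal := by
  constructor
  · intro hpir M _
    exact IsPrincipalIdealRing.principal M
  · intro hMax
    apply IsPrincipalIdealRing.of_prime
    intro P hP
    by_cases hPm : P.IsMaximal
    · exact hMax P hPm
    obtain ⟨ι, w, hwP, hind, hsup⟩ := h P hP
    classical
    -- complement ideals
    set Q : ι → Ideal R := fun i => ⨆ (j) (_ : j ≠ i), Ideal.span {w j} with hQ
    have hdisj : ∀ i, Disjoint (Ideal.span {w i}) (Q i) := fun i => hind i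
    have hzero : ∀ i, ∀ x, x ∈ Ideal.span {w i} → x ∈ Q i → x = 0 := by
      intro i x hx hx'
      exact Submodule.disjoint_def.mp (hdisj i) x hx hx'
    have hPle : ∀ i, P ≤ Ideal.span {w i} ⊔ Q i := by
      intro i
      rw [← hsup]
      apply iSup_le
      intro j
      by_cases hji : j = i
      · subst hji; exact le_sup_left
      · exact le_trans (le_trans (le_iSup₂ (f := fun (j) (_ : j ≠ i) => Ideal.span {w j}) j hji) le_rfl) le_sup_right
    -- Step 1: for each maximal M ⊇ P, some u ∉ M kills w i
    have hann : ∀ i, ∀ M : Ideal R, M.IsMaximal → P ≤ M → ∃ u, u ∉ M ∧ u * w i = 0 := by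
      intro i M hMmax hPM
      obtain ⟨m, hm⟩ := (hMax M hMmax).principal
      have hmP : m ∉ P := by
        intro hmem
        have hMP : M ≤ P := by
          rw [hm]
          exact (Submodule.span_le).mpr (Set.singleton_subset_iff.mpr hmem)
        exact hPm (le_antisymm hPM hMP ▸ hMmax)
      have hwiM : w i ∈ M := hPM (hwP i)
      rw [hm] at hwiM
      obtain ⟨y, hy⟩ := Ideal.mem_span_singleton'.mp hwiM
      have hyP : y ∈ P := by
        rcases hP.mem_or_mem (hy ▸ hwP i) with h1 | h1
        · exact h1
        · exact absurd h1 hmP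
      obtain ⟨a, haw, q, hq, haq⟩ := Submodule.mem_sup.mp (hPle i hyP)
      obtain ⟨c, hc⟩ := Ideal.mem_span_singleton'.mp haw
      refine ⟨1 - c * m, ?_, ?_⟩
      · intro hmem
        have : c * m ∈ M := by
          rw [hm]
          exact Ideal.mul_mem_left _ c (Ideal.mem_span_singleton_self m)
        have h1 : (1 : R) ∈ M := by
          have := M.add_mem hmem this
          simpa using this
        exact hMmax.ne_top (Ideal.eq_top_of_isUnit_mem _ h1 isUnit_one)
      · have key : (1 - c * m) * w i = q * m := by
          have : w i = (a + q) * m := by rw [haq, hy]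
          rw [← hc] at this
          ring_nf
          ring_nf at this
          linear_combination this
        have h1 : (1 - c * m) * w i ∈ Ideal.span {w i} :=
          Ideal.mem_span_singleton'.mpr ⟨1 - c * m, rfl⟩
        have h2 : (1 - c * m) * w i ∈ Q i := by
          rw [key]
          exact Ideal.mul_mem_right m _ hq
        exact hzero i _ h1 h2
    -- Step 2: each w i = b * (w i * w i)
    have hb : ∀ i, ∃ b, b * (w i * w i) = w i := by
      intro i
      set A : Ideal R := (Submodule.span R ({w i} : Set R)).annihilator with hA
      have hJ : P ⊔ A = ⊤ := by
        by_contra hJ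
        obtain ⟨M, hMmax, hJM⟩ := Ideal.exists_le_maximal _ hJ
        obtain ⟨u, huM, hu0⟩ := hann i M hMmax (le_trans le_sup_left hJM)
        have : u ∈ A := by
          rw [hA, Submodule.mem_annihilator_span_singleton, smul_eq_mul]
          exact hu0
        exact huM (hJM (le_sup_right (a := P) this))
      have h1 : (1 : R) ∈ P ⊔ A := hJ ▸ Submodule.mem_top
      obtain ⟨p, hp, u, hu, hpu⟩ := Submodule.mem_sup.mp h1
      have hu0 : u * w i = 0 := by
        rw [hA, Submodule.mem_annihilator_span_singleton, smul_eq_mul] at hu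
        exact hu
      have hpw : p * w i = w i := by
        have : (p + u) * w i = w i := by rw [hpu, one_mul]
        rw [add_mul, hu0, add_zero] at this
        exact this
      obtain ⟨c, hcw, q, hq, hcq⟩ := Submodule.mem_sup.mp (hPle i hp)
      obtain ⟨b, hbw⟩ := Ideal.mem_span_singleton'.mp hcw
      have hqw : q * w i = 0 := by
        apply hzero i
        · exact Ideal.mem_span_singleton'.mpr ⟨q, rfl⟩
        · exact Ideal.mul_mem_right _ _ hq
      refine ⟨b, ?_⟩
      have : (c + q) * w i = w i := by rw [hcq]; exact hpw
      rw [add_mul, hqw, add_zero, ← hbw] at this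
      linear_combination this
    choose b hbspec using hb
    set e : ι → R := fun i => b i * w i with he
    have hew : ∀ i, e i * w i = w i := by
      intro i
      rw [he]
      calc b i * w i * w i = b i * (w i * w i) := by ring
        _ = w i := hbspec i
    have hworth : ∀ i j, i ≠ j → w i * w j = 0 := by
      intro i j hij
      apply hzero i
      · exact Ideal.mem_span_singleton'.mpr ⟨w j, mul_comm _ _⟩
      · have : Ideal.span {w j} ≤ Q i :=
          le_iSup₂ (f := fun (k) (_ : k ≠ i) => Ideal.span {w k}) j (Ne.symm hij)
        exact this (Ideal.mul_mem_left _ (w i) (Ideal.mem_span_singleton_self (w j)))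
    have heorth : ∀ i j, i ≠ j → e i * e j = 0 := by
      intro i j hij
      rw [he]
      calc b i * w i * (b j * w j) = b i * b j * (w i * w j) := by ring
        _ = 0 := by rw [hworth i j hij, mul_zero]
    -- Step 3: finitely many nonzero w i
    have hne : ∀ i, w i ≠ 0 → e i ≠ 0 := by
      intro i hwi hei
      exact hwi (by rw [← hew i, hei, zero_mul])
    have hmax_ex : ∀ i : {i : ι // w i ≠ 0}, ∃ M : Ideal R, M.IsMaximal ∧ 1 - e i.1 ∈ M := by
      intro ⟨i, hi⟩
      have hne' : Ideal.span {1 - e i} ≠ ⊤ := by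
        intro htop
        have hu : IsUnit (1 - e i) := Ideal.span_singleton_eq_top.mp htop
        have hee : e i * e i = e i := by
          show (b i * w i) * (b i * w i) = b i * w i
          calc b i * w i * (b i * w i) = b i * (b i * (w i * w i)) := by ring
            _ = b i * w i := by rw [hbspec i]
        have hz : (1 - e i) * e i = 0 := by rw [sub_mul, one_mul, hee, sub_self]
        have := hu.mul_right_eq_zero.mp hz
        exact hne i hi this
      obtain ⟨M, hMmax, hM⟩ := Ideal.exists_le_maximal _ hne'
      exact ⟨M, hMmax, hM (Ideal.mem_span_singleton_self _)⟩
    choose F hFmax hFmem using hmax_ex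
    have hFinj : Function.Injective F := by
      intro i j hij
      by_contra hne'
      have hij' : i.1 ≠ j.1 := fun hh => hne' (Subtype.ext hh)
      have h1 : e i.1 * (1 - e j.1) = e i.1 := by
        rw [mul_sub, heorth i.1 j.1 hij', mul_one, sub_zero]
      have hei : e i.1 ∈ F i := by
        rw [← h1]
        have : (1 - e j.1) ∈ F i := hij ▸ hFmem j
        exact Ideal.mul_mem_left _ _ this
      have h2 : (1 : R) ∈ F i := by
        have := (F i).add_mem hei (hFmem i)
        simpa using this
      exact (hFmax i).ne_top (Ideal.eq_top_of_isUnit_mem _ h2 isUnit_one)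
    have : Finite {I : Ideal R // I.IsMaximal} := hsemi.to_subtype
    have hfin : Finite {i : ι // w i ≠ 0} :=
      Finite.of_injective (fun i => (⟨F i, hFmax i⟩ : {I : Ideal R // I.IsMaximal}))
        (fun i j hij => hFinj (Subtype.ext_iff.mp hij))
    have hSfin : {i : ι | w i ≠ 0}.Finite := Set.finite_coe_iff.mp hfin
    -- Step 4: the generator
    set E : R := ∑ i ∈ hSfin.toFinset, e i with hE
    have hEP : E ∈ P := by
      apply Ideal.sum_mem
      intro i _
      exact P.mul_mem_left (b i) (hwP i)
    have hwE : ∀ j, w j ∈ Ideal.span {E} := by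
      intro j
      by_cases hj : w j = 0
      · rw [hj]; exact Ideal.zero_mem _
      · have hjS : j ∈ hSfin.toFinset := by
          rw [Set.Finite.mem_toFinset]; exact hj
        have : w j * E = w j := by
          rw [hE, Finset.mul_sum]
          rw [Finset.sum_eq_single j]
          · rw [mul_comm, hew]
          · intro i _ hij
            rw [he]
            calc w j * (b i * w i) = b i * (w i * w j) := by ring
              _ = 0 := by rw [hworth i j hij, mul_zero]
          · intro hjn; exact absurd hjS hjn
        exact Ideal.mem_span_singleton'.mpr ⟨w j, this⟩
    have hPE : P = Ideal.span {E} := by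
      apply le_antisymm
      · rw [← hsup]
        apply iSup_le
        intro j
        rw [Ideal.span_le, Set.singleton_subset_iff]
        exact hwE j
      · rw [Ideal.span_le, Set.singleton_subset_iff]
        exact hEP
    exact ⟨E, hPE⟩
end

section
/- Let R be a commutative ring. Suppose that for each maximal ideal M of R there is a family (w_λ)_{λ∈Λ} of elements of R such that M is the internal direct sum of the cyclic ideals Rw_λ and for each λ the quotient ring R/Ann(w_λ) is a principal ideal ring. Then every prime ideal of R is a direct sum of cyclic R-modules. -/
/-!
Let `P` be prime and `M ⊇ P` maximal, `M = ⨁ R wᵢ`. If every `wᵢ` lies in `P` then `P = M`.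
Otherwise some `w₀ ∉ P`, and for `i ≠ 0` the product `wᵢ w₀` lies in `R wᵢ ∩ R w₀ = 0 ⊆ P`, so
`wᵢ ∈ P`. By the modular law `P = (P ∩ R w₀) ⊕ ⨁_{i ≠ 0} R wᵢ`, and `P ∩ R w₀` is cyclic because
`R w₀ ≅ R / Ann(w₀)` and every ideal of `R / Ann(w₀)` is principal.
-/

open Function

theorem iSup_update_inf_eq {α ι : Type*} [CompleteLattice α] [IsModularLattice α] [DecidableEq ι]
    {f : ι → α} {p : α} {i₀ : ι} (hp : p ≤ ⨆ i, f i) (hf : ∀ i ≠ i₀, f i ≤ p) :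
    ⨆ i, update f i₀ (p ⊓ f i₀) i = p := by
  have hrest : ⨆ (i) (_ : i ≠ i₀), f i ≤ p := iSup₂_le hf
  rw [iSup_split_single _ i₀, update_self]
  simp_rw [update_apply]
  calc p ⊓ f i₀ ⊔ ⨆ (i) (_ : i ≠ i₀), (if i = i₀ then p ⊓ f i₀ else f i)
      = p ⊓ f i₀ ⊔ ⨆ (i) (_ : i ≠ i₀), f i := by
        congr 1; exact iSup_congr fun i => iSup_congr fun hi => if_neg hi
    _ = p ⊓ (f i₀ ⊔ ⨆ (i) (_ : i ≠ i₀), f i) := inf_sup_assoc_of_le _ hrest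
    _ = p := by rw [← iSup_split_single, inf_eq_left.2 hp]

namespace Ideal

variable {R : Type*} [CommRing R]

theorem IsPrime.le_or_le_of_disjoint {P I J : Ideal R} (hP : P.IsPrime) (h : Disjoint I J) :
    I ≤ P ∨ J ≤ P :=
  hP.mul_le.1 <| mul_le_inf.trans <| h.eq_bot ▸ bot_le

theorem exists_span_singleton_sup_eq_of_le {I J : Ideal R} [IsPrincipalIdealRing (R ⧸ I)]
    (hIJ : I ≤ J) : ∃ s, span {s} ⊔ I = J := by
  obtain ⟨a, ha⟩ := Submodule.IsPrincipal.principal (J.map (Quotient.mk I))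
  obtain ⟨s, rfl⟩ := Quotient.mk_surjective a
  refine ⟨s, ?_⟩
  have hmap : J.map (Quotient.mk I) = (span {s}).map (Quotient.mk I) := by
    rw [map_span, Set.image_singleton]; exact ha
  have hcomap := congrArg (comap (Quotient.mk I)) hmap
  rwa [comap_map_of_surjective' _ Quotient.mk_surjective,
    comap_map_of_surjective' _ Quotient.mk_surjective, mk_ker, sup_eq_left.2 hIJ, eq_comm] at hcomap

/-- Submodules of `R w ≅ R ⧸ Ann(w)` correspond to ideals of `R ⧸ Ann(w)`. -/
theorem isPrincipal_of_le_span_singleton {w : R} [IsPrincipalIdealRing (R ⧸ torsionOf R R w)]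
    {N : Ideal R} (hN : N ≤ span {w}) : N.IsPrincipal := by
  set φ := LinearMap.toSpanSingleton R R w
  have hker : torsionOf R R w ≤ Submodule.comap φ N := fun x hx =>
    Submodule.mem_comap.2 <| (show φ x = 0 from hx) ▸ N.zero_mem
  obtain ⟨s, hs⟩ := exists_span_singleton_sup_eq_of_le hker
  have hNrange : N ≤ LinearMap.range φ := LinearMap.span_singleton_eq_range R R w ▸ hN
  have hN_eq : N = Submodule.map φ (span {s}) := by
    rw [← Submodule.map_comap_eq_self hNrange, ← hs]
    exact le_antisymm (LinearMap.map_le_map_iff _ |>.2 le_rfl) (Submodule.map_mono le_sup_left)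
  exact hN_eq ▸ (⟨⟨s, rfl⟩⟩ : (span {s}).IsPrincipal).map φ

end Ideal

theorem IsDirectSumOfCyclics.of_iSupIndep {R : Type} [CommRing R] {P : Ideal R} {ι : Type}
    {f : ι → Ideal R} (hf : iSupIndep f) (hP : ⨆ i, f i = P) (hprin : ∀ i, (f i).IsPrincipal) :
    IsDirectSumOfCyclics P := by
  have hgen : ∀ i, Ideal.span {Submodule.IsPrincipal.generator (f i)} = f i :=
    fun i => Submodule.IsPrincipal.span_singleton_generator (f i)
  refine ⟨ι, fun i => Submodule.IsPrincipal.generator (f i), fun i => ?_, ?_, ?_⟩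
  · exact hP ▸ Submodule.mem_iSup_of_mem i (Submodule.IsPrincipal.generator_mem (f i))
  · simpa only [hgen] using hf
  · simpa only [hgen] using hP

theorem primes_direct_sum_of_cyclics_of_maximals_decompose
    {R : Type} [CommRing R]
    (h : ∀ M : Ideal R, M.IsMaximal → ∃ (ι : Type) (w : ι → R),
      (∀ i, w i ∈ M) ∧ iSupIndep (fun i => Ideal.span {w i}) ∧
      (⨆ i, Ideal.span {w i}) = M ∧
      ∀ i, IsPrincipalIdealRing (R ⧸ Ideal.torsionOf R R (w i))) :
    ∀ P : Ideal R, P.IsPrime → IsDirectSumOfCyclics P := by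
  classical
  intro P hP
  obtain ⟨M, hM, hPM⟩ := P.exists_le_maximal hP.ne_top
  obtain ⟨ι, w, hwM, hindep, hsup, hPIR⟩ := h M hM
  set f : ι → Ideal R := fun i => Ideal.span {w i}
  by_cases hall : ∀ i, f i ≤ P
  · have hPM' : P = M := le_antisymm hPM (hsup ▸ iSup_le hall)
    exact hPM' ▸ ⟨ι, w, hwM, hindep, hsup⟩
  obtain ⟨i₀, hi₀⟩ := not_forall.1 hall
  have hother : ∀ i ≠ i₀, f i ≤ P := fun i hi =>
    (hP.le_or_le_of_disjoint (hindep.pairwiseDisjoint hi)).resolve_right hi₀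
  have hle : update f i₀ (P ⊓ f i₀) ≤ f := update_le_iff.2 ⟨inf_le_right, fun _ _ => le_rfl⟩
  have hprin : ∀ i, (update f i₀ (P ⊓ f i₀) i).IsPrincipal := by
    have := hPIR i₀
    refine (forall_update_iff f fun i (N : Ideal R) => N.IsPrincipal).2 ⟨?_, fun i _ => ⟨⟨w i, rfl⟩⟩⟩
    exact Ideal.isPrincipal_of_le_span_singleton inf_le_right
  exact .of_iSupIndep (hindep.mono hle) (iSup_update_inf_eq (hsup ▸ hPM) hother) hprin
end

section
/- Let R be the subring of the product ∏_{i∈ℕ} ℤ/2ℤ consisting of all sequences that are eventually constant. Then every prime ideal of R is a direct sum of cyclic R-modules, but there exists an element v ∈ R such that R/Ann(v) is not a principal ideal ring. -/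
open Filter in
/-- The subring of `∏_{i ∈ ℕ} ℤ/2ℤ` consisting of the eventually constant
sequences. -/
def EvConst : Subring (ℕ → ZMod 2) where
  carrier := {a | ∃ c, ∀ᶠ n in atTop, a n = c}
  zero_mem' := ⟨0, Eventually.of_forall fun _ => rfl⟩
  one_mem' := ⟨1, Eventually.of_forall fun _ => rfl⟩
  add_mem' := by
    rintro a b ⟨c, hc⟩ ⟨d, hd⟩
    exact ⟨c + d, (hc.and hd).mono fun n h => by simp [h.1, h.2]⟩
  neg_mem' := by
    rintro a ⟨c, hc⟩
    exact ⟨-c, hc.mono fun n h => by simp [h]⟩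
  mul_mem' := by
    rintro a b ⟨c, hc⟩ ⟨d, hd⟩
    exact ⟨c * d, (hc.and hd).mono fun n h => by simp [h.1, h.2]⟩

open Filter

namespace EvAux

lemma zmod2_cases (x : ZMod 2) : x = 0 ∨ x = 1 := by revert x; decide

/-- the indicator of `{i}` -/
def E (i : ℕ) : EvConst :=
  ⟨fun n => if n = i then 1 else 0, 0, eventually_atTop.2 ⟨i + 1, fun n hn => if_neg (by omega)⟩⟩

lemma E_apply (i n : ℕ) : (E i : ℕ → ZMod 2) n = if n = i then 1 else 0 := rfl

lemma coe_mul_apply (a b : EvConst) (n : ℕ) :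
    ((a * b : EvConst) : ℕ → ZMod 2) n = (a : ℕ → ZMod 2) n * (b : ℕ → ZMod 2) n := rfl

lemma coe_add_apply (a b : EvConst) (n : ℕ) :
    ((a + b : EvConst) : ℕ → ZMod 2) n = (a : ℕ → ZMod 2) n + (b : ℕ → ZMod 2) n := rfl

lemma coe_sub_apply (a b : EvConst) (n : ℕ) :
    ((a - b : EvConst) : ℕ → ZMod 2) n = (a : ℕ → ZMod 2) n - (b : ℕ → ZMod 2) n := rfl

lemma coe_one_apply (n : ℕ) : ((1 : EvConst) : ℕ → ZMod 2) n = 1 := rfl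

lemma coe_zero_apply (n : ℕ) : ((0 : EvConst) : ℕ → ZMod 2) n = 0 := rfl

/-- an eventually-zero element is in the sup of the spans of the `E i` -/
lemma mem_iSup_of_evzero (b : EvConst) (N : ℕ) (hb : ∀ n, N ≤ n → (b : ℕ → ZMod 2) n = 0) :
    b ∈ ⨆ i, Ideal.span {E i} := by
  have hbe : b = ∑ i ∈ Finset.range N, b * E i := by
    apply Subtype.ext
    have hcast : ((∑ i ∈ Finset.range N, b * E i : EvConst) : ℕ → ZMod 2)
        = ∑ i ∈ Finset.range N, ((b * E i : EvConst) : ℕ → ZMod 2) :=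
      map_sum EvConst.subtype _ _
    funext n
    rw [hcast, Finset.sum_apply]
    simp only [coe_mul_apply, E_apply, mul_ite, mul_one, mul_zero]
    rw [Finset.sum_ite_eq]
    by_cases hn : n ∈ Finset.range N
    · simp [hn]
    · simp only [hn, if_false]
      exact hb n (by simpa using hn)
  rw [hbe]
  exact Submodule.sum_mem _ fun i _ =>
    (le_iSup (fun i => Ideal.span {E i}) i) (Ideal.mem_span_singleton'.2 ⟨b, rfl⟩)

/-- evaluation at a coordinate -/
def evalHom (i : ℕ) : EvConst →+* ZMod 2 :=
  (Pi.evalRingHom (fun _ => ZMod 2) i).comp EvConst.subtype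

lemma evalHom_apply (i : ℕ) (a : EvConst) : evalHom i a = (a : ℕ → ZMod 2) i := rfl

theorem part1 (P : Ideal EvConst) (hP : P.IsPrime) : IsDirectSumOfCyclics P := by
  by_cases h : ∃ i, (1 - E i) ∈ P
  · -- P = span {1 - E i}
    obtain ⟨i, hi⟩ := h
    have hPle : P ≤ Ideal.span {1 - E i} := by
      intro a ha
      have hai : (a : ℕ → ZMod 2) i = 0 := by
        by_contra hne
        have hai1 : (a : ℕ → ZMod 2) i = 1 := (zmod2_cases _).resolve_left hne
        have hEi : E i = a * E i := by
          apply Subtype.ext; funext n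
          by_cases hn : n = i <;>
            simp [coe_mul_apply, E_apply, hn, hai1]
        have hone : (1 : EvConst) = E i + (1 - E i) := by ring
        have h1 : (1 : EvConst) ∈ P := by
          rw [hone]
          exact P.add_mem (hEi ▸ P.mul_mem_right (E i) ha) hi
        exact hP.ne_top ((Ideal.eq_top_iff_one P).2 h1)
      refine Ideal.mem_span_singleton'.2 ⟨a, ?_⟩
      apply Subtype.ext; funext n
      by_cases hn : n = i <;>
        simp [coe_mul_apply, coe_sub_apply, coe_one_apply, E_apply, hn, hai]
    refine ⟨PUnit, fun _ => 1 - E i, fun _ => hi, ?_, ?_⟩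
    · intro j
      have hbot : (⨆ (k : PUnit), ⨆ (_ : k ≠ j), Ideal.span {1 - E i}) = ⊥ := by
        rw [iSup_eq_bot]; intro k; rw [iSup_eq_bot]; intro hk
        exact absurd (Subsingleton.elim k j) hk
      rw [hbot]
      exact disjoint_bot_right
    · rw [iSup_const]
      exact le_antisymm (Ideal.span_le.2 (by simpa using hi)) hPle
  · -- P = the ideal of eventually-zero sequences
    push_neg at h
    have hE : ∀ i, E i ∈ P := by
      intro i
      have hmul : E i * (1 - E i) = 0 := by
        apply Subtype.ext; funext n
        by_cases hn : n = i <;>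
          simp [coe_mul_apply, coe_sub_apply, coe_one_apply, coe_zero_apply, E_apply, hn]
      rcases hP.mem_or_mem (hmul ▸ P.zero_mem) with h1 | h2
      · exact h1
      · exact absurd h2 (h i)
    refine ⟨ℕ, E, hE, ?_, ?_⟩
    · intro i
      have hle : (⨆ (j : ℕ), ⨆ (_ : j ≠ i), Ideal.span {E j}) ≤ RingHom.ker (evalHom i) := by
        refine iSup_le fun j => iSup_le fun hj => Ideal.span_le.2 ?_
        intro x hx
        simp only [Set.mem_singleton_iff] at hx
        subst hx
        simp only [SetLike.mem_coe, RingHom.mem_ker, evalHom_apply, E_apply]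
        exact if_neg (Ne.symm hj)
      rw [Submodule.disjoint_def]
      intro x hx1 hx2
      obtain ⟨c, hc⟩ := Ideal.mem_span_singleton'.1 hx1
      have hxi : (x : ℕ → ZMod 2) i = 0 := hle hx2
      apply Subtype.ext; funext n
      by_cases hn : n = i
      · rw [hn]; exact hxi
      · rw [← hc]
        simp [coe_mul_apply, E_apply, hn]
    · refine le_antisymm (iSup_le fun i => Ideal.span_le.2 (by simpa using hE i)) ?_
      intro a ha
      obtain ⟨c, hc⟩ := a.2
      rcases zmod2_cases c with rfl | rfl
      · obtain ⟨N, hN⟩ := eventually_atTop.1 hc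
        exact mem_iSup_of_evzero a N hN
      · exfalso
        obtain ⟨N, hN⟩ := eventually_atTop.1 hc
        have h1a : (1 - a) ∈ ⨆ i, Ideal.span {E i} := by
          refine mem_iSup_of_evzero (1 - a) N fun n hn => ?_
          rw [coe_sub_apply, coe_one_apply, hN n hn, sub_self]
        have h1aP : (1 - a) ∈ P :=
          (iSup_le fun i => Ideal.span_le.2 (by simpa using hE i) : _ ≤ P) h1a
        have h1 : (1 : EvConst) ∈ P := by
          have := P.add_mem ha h1aP
          simpa using this
        exact hP.ne_top ((Ideal.eq_top_iff_one P).2 h1)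

/-- the witness `(0,1,1,1,...)` -/
def v : EvConst :=
  ⟨fun n => if n = 0 then 0 else 1, 1, eventually_atTop.2 ⟨1, fun n hn => if_neg (by omega)⟩⟩

lemma v_apply (n : ℕ) : (v : ℕ → ZMod 2) n = if n = 0 then 0 else 1 := rfl

lemma mem_torsionOf_iff' (a : EvConst) :
    a ∈ Ideal.torsionOf EvConst EvConst v ↔ ∀ n, 1 ≤ n → (a : ℕ → ZMod 2) n = 0 := by
  rw [Ideal.mem_torsionOf_iff, smul_eq_mul]
  constructor
  · intro hav n hn
    have := congrFun (congrArg (Subtype.val) hav) n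
    rw [coe_mul_apply, v_apply, if_neg (by omega), mul_one] at this
    exact this
  · intro hX
    apply Subtype.ext; funext n
    by_cases hn : n = 0
    · simp [coe_mul_apply, v_apply, hn, coe_zero_apply]
    · rw [coe_mul_apply, hX n (by omega), zero_mul, coe_zero_apply]

/-- the ideal of eventually-zero sequences -/
def I0 : Ideal EvConst where
  carrier := {a | ∀ᶠ n in atTop, (a : ℕ → ZMod 2) n = 0}
  zero_mem' := Eventually.of_forall fun _ => rfl
  add_mem' := by
    intro a b ha hb
    filter_upwards [ha, hb] with n h1 h2
    rw [Set.mem_setOf_eq] at *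
    rw [coe_add_apply, h1, h2, add_zero]
  smul_mem' := by
    intro c a ha
    filter_upwards [ha] with n h1
    rw [Set.mem_setOf_eq] at *
    show ((c * a : EvConst) : ℕ → ZMod 2) n = 0
    rw [coe_mul_apply, h1, mul_zero]

set_option synthInstance.maxHeartbeats 1000000 in
theorem part2 : ¬ IsPrincipalIdealRing (EvConst ⧸ Ideal.torsionOf EvConst EvConst v) := by
  intro hpir
  set T := Ideal.torsionOf EvConst EvConst v with hT
  set π := Ideal.Quotient.mk T with hπ
  set Pinf : Ideal EvConst := ⨆ i, Ideal.span {E i} with hPinf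
  obtain ⟨g0, hg0⟩ := (hpir.principal (Ideal.map π Pinf))
  obtain ⟨g, rfl⟩ := Ideal.Quotient.mk_surjective g0
  -- g is in Pinf ⊔ T, hence eventually zero
  have hgmem : g ∈ Pinf ⊔ T := by
    have hmem : π g ∈ Ideal.map π Pinf := hg0 ▸ Ideal.mem_span_singleton_self _
    have h2 : g ∈ Ideal.comap π (Ideal.map π Pinf) := hmem
    rwa [Ideal.comap_map_of_surjective π Ideal.Quotient.mk_surjective,
      ← RingHom.ker_eq_comap_bot, Ideal.mk_ker] at h2
  have hTmem : T ≤ Pinf := by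
    intro a ha
    exact mem_iSup_of_evzero a 1 ((mem_torsionOf_iff' a).1 ha)
  rw [sup_eq_left.2 hTmem] at hgmem
  -- elements of Pinf are eventually zero
  have hI0 : Pinf ≤ I0 := by
    refine iSup_le fun i => Ideal.span_le.2 ?_
    intro x hx
    simp only [Set.mem_singleton_iff] at hx
    subst hx
    show ∀ᶠ n in atTop, (E i : ℕ → ZMod 2) n = 0
    exact eventually_atTop.2 ⟨i + 1, fun n hn => if_neg (by omega)⟩
  obtain ⟨N, hN⟩ := eventually_atTop.1 (hI0 hgmem)
  set M := max N 1 with hM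
  -- E M ∈ map π Pinf = span {π g}
  have hEM : π (E M) ∈ Ideal.map π Pinf :=
    Ideal.mem_map_of_mem π ((le_iSup (fun i => Ideal.span {E i}) M)
      (Ideal.mem_span_singleton_self _))
  rw [hg0] at hEM
  obtain ⟨u, hu⟩ := Ideal.mem_span_singleton'.1 hEM
  obtain ⟨r, rfl⟩ := Ideal.Quotient.mk_surjective u
  have hker : r * g - E M ∈ T := by
    rw [← Ideal.mk_ker (I := T), RingHom.mem_ker, map_sub, map_mul]
    rw [hπ] at hu
    rw [hu]
    exact sub_self _
  have heval := (mem_torsionOf_iff' _).1 hker M (le_max_right N 1)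
  rw [coe_sub_apply, coe_mul_apply, hN M (le_max_left N 1), mul_zero, E_apply,
    if_pos rfl, zero_sub] at heval
  exact one_ne_zero (neg_eq_zero.mp heval)

end EvAux

theorem evConst_primes_direct_sum_but_not_converse :
    (∀ P : Ideal EvConst, P.IsPrime → IsDirectSumOfCyclics P) ∧
    ∃ v : EvConst,
      ¬ IsPrincipalIdealRing (EvConst ⧸ Ideal.torsionOf EvConst EvConst v) := by
  exact ⟨EvAux.part1, ⟨EvAux.v, EvAux.part2⟩⟩
end

section
/- Let R be a commutative ring, I an ideal of R contained in the Jacobson radical, and M an R-module that is a direct sum of a family of finitely generated R-modules. If IM = M, then M = 0. -/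
theorem nakayama_for_direct_sums_of_fg
    {R : Type} [CommRing R] {M : Type} [AddCommGroup M] [Module R M]
    (I : Ideal R) (hI : I ≤ (⊥ : Ideal R).jacobson)
    {ι : Type} (N : ι → Submodule R M) (hfg : ∀ i, (N i).FG)
    (hindep : iSupIndep N) (hsup : (⨆ i, N i) = ⊤)
    (hIM : I • (⊤ : Submodule R M) = ⊤) :
    (⊤ : Submodule R M) = ⊥ := by
  classical
  have hint : DirectSum.IsInternal N :=
    (DirectSum.isInternal_submodule_iff_iSupIndep_and_iSup_eq_top N).2 ⟨hindep, hsup⟩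
  have hNi : ∀ i, N i = ⊥ := by
    intro i
    let e : (DirectSum ι fun i => N i) ≃ₗ[R] M :=
      LinearEquiv.ofBijective (DirectSum.coeLinearMap N) hint
    let π : M →ₗ[R] N i := (DirectSum.component R ι (fun i => N i) i) ∘ₗ e.symm.toLinearMap
    have hπ : ∀ x : N i, π (x : M) = x := by
      intro x
      have := hint.ofBijective_coeLinearMap_same x
      have h2 : π (x : M) = e.symm (x : M) i := rfl
      rw [h2, this]
    have hsurj : Submodule.map π ⊤ = ⊤ := by
      rw [Submodule.eq_top_iff']
      intro x
      exact ⟨(x : M), trivial, hπ x⟩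
    have key : (⊤ : Submodule R (N i)) = I • ⊤ := by
      conv_lhs => rw [← hsurj, ← hIM, Submodule.map_smul'', hsurj]
    have : (⊤ : Submodule R (N i)) = ⊥ :=
      Submodule.eq_bot_of_le_smul_of_le_jacobson_bot I ⊤
        (Submodule.fg_top (N i) |>.2 (hfg i)) key.le hI
    rw [eq_bot_iff]
    intro x hx
    have h0 : (⟨x, hx⟩ : N i) ∈ (⊥ : Submodule R (N i)) := this ▸ Submodule.mem_top
    rw [Submodule.mem_bot] at h0
    simpa using congrArg Subtype.val h0
  rw [← hsup]
  simp [hNi]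
end

section
/- Let (R, M) be a commutative local ring. If every prime ideal of R is a direct sum of cyclic R-modules, then M can be written as an internal direct sum M = ⊕_{λ∈Λ} Rw_λ with R/Ann(w_λ) a principal ideal ring for each λ ∈ Λ. -/
/-! Write `M = ⨁ R wᵢ` and fix `i`. Since `wⱼ wᵢ = 0` for `j ≠ i`, the local ring `S = R ⧸ Ann(wᵢ)` has
principal maximal ideal `(t)`, `t` the image of `wᵢ`, and such a ring is a principal ideal ring as soon as
`J = ⋂ₙ (tⁿ)` vanishes. This is clear if `t` is nilpotent. Otherwise `J` is prime with `J = tJ`, so its preimage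
`Q` in `R` is a prime, hence a direct sum `⨁ R vₖ`, with `Q wᵢ ⊆ Q wᵢ²`. Comparing `k`-th components in
`vₖ wᵢ = u wᵢ²`, `u ∈ Q`, gives `vₖ wᵢ (1 - c wᵢ) = 0`, so `Q wᵢ = 0`, i.e. `Q ⊆ Ann(wᵢ)` and `J = 0`. -/

open IsLocalRing

section CommRing

variable {R : Type*} [CommRing R]

theorem mul_eq_zero_of_iSupIndep_span {ι : Type*} {v : ι → R}
    (hv : iSupIndep fun i => Ideal.span {v i}) {i j : ι} (hij : i ≠ j) : v i * v j = 0 := by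
  have hmem : v i * v j ∈ Ideal.span {v i} ⊓ Ideal.span {v j} :=
    ⟨Ideal.mul_mem_right _ _ (Ideal.mem_span_singleton_self _),
      Ideal.mul_mem_left _ _ (Ideal.mem_span_singleton_self _)⟩
  rwa [(hv.pairwiseDisjoint hij).eq_bot, Ideal.mem_bot] at hmem

theorem map_iSup_span_quotient_torsionOf {ι : Type*} {w : ι → R}
    (hw : iSupIndep fun i => Ideal.span {w i}) (i : ι) :
    (⨆ j, Ideal.span {w j}).map (Ideal.Quotient.mk (Ideal.torsionOf R R (w i))) =
      Ideal.span {Ideal.Quotient.mk _ (w i)} := by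
  simp only [Ideal.map_iSup, Ideal.map_span, Set.image_singleton]
  refine le_antisymm (iSup_le fun j => ?_) (le_iSup_of_le i le_rfl)
  rcases eq_or_ne j i with rfl | hji
  · rfl
  · have : w j ∈ Ideal.torsionOf R R (w i) := by
      rw [Ideal.mem_torsionOf_iff, smul_eq_mul]
      exact mul_eq_zero_of_iSupIndep_span hw hji
    simp [Ideal.Quotient.eq_zero_iff_mem.mpr this]

theorem le_span_singleton_mul_of_isPrime {J : Ideal R} (hJ : J.IsPrime) {t : R}
    (hle : J ≤ Ideal.span {t}) (ht : t ∉ J) : J ≤ Ideal.span {t} * J := by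
  intro a ha
  obtain ⟨b, rfl⟩ := Ideal.mem_span_singleton'.mp (hle ha)
  exact Ideal.mem_span_singleton_mul.mpr ⟨b, (hJ.mem_or_mem ha).resolve_right ht, mul_comm _ _⟩

end CommRing

section LocalRing

variable {R : Type*} [CommRing R] [IsLocalRing R]

theorem pow_eq_zero_of_pow_mem_span_pow_succ {t : R} (ht : t ∈ maximalIdeal R) {n : ℕ}
    (h : t ^ n ∈ Ideal.span {t ^ (n + 1)}) : t ^ n = 0 := by
  obtain ⟨e, he⟩ := Ideal.mem_span_singleton'.mp h
  have hunit : IsUnit (1 - e * t) :=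
    isUnit_one_sub_self_of_mem_nonunits _ (Ideal.mul_mem_left _ e ht)
  exact hunit.mul_left_eq_zero.mp (by linear_combination -he)

theorem pow_notMem_iInf_span_pow {t : R} (ht : t ∈ maximalIdeal R) {n : ℕ} (hn : t ^ n ≠ 0) :
    t ^ n ∉ ⨅ m : ℕ, Ideal.span {t ^ m} := fun h =>
  hn (pow_eq_zero_of_pow_mem_span_pow_succ ht ((Submodule.mem_iInf _).mp h (n + 1)))

theorem exists_isUnit_mul_pow_of_notMem_iInf {t : R}
    (hmax : maximalIdeal R = Ideal.span {t}) {a : R} (ha : a ∉ ⨅ n : ℕ, Ideal.span {t ^ n}) :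
    ∃ (c : R) (m : ℕ), IsUnit c ∧ a = c * t ^ m := by
  classical
  have hex : ∃ n, a ∉ Ideal.span {t ^ (n + 1)} := by
    by_contra! hall
    refine ha ((Submodule.mem_iInf _).mpr fun n => ?_)
    cases n with
    | zero => simp
    | succ n => exact hall n
  have ham : a ∈ Ideal.span {t ^ Nat.find hex} := by
    cases hm : Nat.find hex with
    | zero => simp
    | succ k => exact not_not.mp (Nat.find_min hex (by omega : k < Nat.find hex))
  obtain ⟨c, hc⟩ := Ideal.mem_span_singleton'.mp ham
  refine ⟨c, Nat.find hex, ?_, hc.symm⟩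
  by_contra hcu
  obtain ⟨d, rfl⟩ := Ideal.mem_span_singleton'.mp (hmax ▸ (mem_maximalIdeal c).mpr hcu)
  exact Nat.find_spec hex (Ideal.mem_span_singleton'.mpr ⟨d, by linear_combination hc⟩)

theorem isPrime_iInf_span_pow {t : R} (hmax : maximalIdeal R = Ideal.span {t})
    (hnil : ∀ n : ℕ, t ^ n ≠ 0) : (⨅ n : ℕ, Ideal.span {t ^ n}).IsPrime := by
  have ht : t ∈ maximalIdeal R := hmax ▸ Ideal.mem_span_singleton_self t
  refine ⟨fun htop => pow_notMem_iInf_span_pow ht (hnil 0) (htop ▸ Submodule.mem_top), ?_⟩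
  intro a b hab
  by_contra! hne
  obtain ⟨c, m, hc, rfl⟩ := exists_isUnit_mul_pow_of_notMem_iInf hmax hne.1
  obtain ⟨d, n, hd, rfl⟩ := exists_isUnit_mul_pow_of_notMem_iInf hmax hne.2
  have hcd : c * d * t ^ (m + n) ∈ ⨅ n : ℕ, Ideal.span {t ^ n} := by
    convert hab using 1
    ring
  exact pow_notMem_iInf_span_pow ht (hnil _) ((Ideal.unit_mul_mem_iff_mem _ (hc.mul hd)).mp hcd)

theorem isPrincipalIdealRing_of_iInf_span_pow_eq_bot {t : R}
    (hmax : maximalIdeal R = Ideal.span {t}) (hJ : ⨅ n : ℕ, Ideal.span {t ^ n} = ⊥) :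
    IsPrincipalIdealRing R := by
  classical
  have hunit : ∀ {a : R}, a ≠ 0 → ∃ (c : R) (m : ℕ), IsUnit c ∧ a = c * t ^ m := fun ha =>
    exists_isUnit_mul_pow_of_notMem_iInf hmax (by rwa [hJ, Ideal.mem_bot])
  refine ⟨fun I => ?_⟩
  by_cases hI : I = ⊥
  · exact hI ▸ bot_isPrincipal
  have hex : ∃ m, t ^ m ∈ I := by
    obtain ⟨a, haI, ha⟩ := Submodule.exists_mem_ne_zero_of_ne_bot hI
    obtain ⟨c, m, hc, rfl⟩ := hunit ha
    exact ⟨m, (Ideal.unit_mul_mem_iff_mem I hc).mp haI⟩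
  refine ⟨t ^ Nat.find hex, le_antisymm (fun b hb => ?_)
    ((Ideal.span_singleton_le_iff_mem I).mpr (Nat.find_spec hex))⟩
  rcases eq_or_ne b 0 with rfl | hb0
  · exact Submodule.zero_mem _
  obtain ⟨d, n, hd, rfl⟩ := hunit hb0
  have hle : Nat.find hex ≤ n := Nat.find_min' hex ((Ideal.unit_mul_mem_iff_mem I hd).mp hb)
  refine Ideal.mem_span_singleton'.mpr ⟨d * t ^ (n - Nat.find hex), ?_⟩
  rw [mul_assoc, ← pow_add, Nat.sub_add_cancel hle]

theorem mul_eq_zero_of_mul_eq_mul_mul {κ : Type*} {v : κ → R}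
    (hv : iSupIndep fun k => Ideal.span {v k}) {m x u : R} (hm : m ∈ maximalIdeal R)
    (hu : u ∈ ⨆ j, Ideal.span {v j}) {k : κ} (h : v k * x = u * x * m) : v k * x = 0 := by
  rw [iSup_split_single _ k, Submodule.mem_sup] at hu
  obtain ⟨a, ha, r, hr, rfl⟩ := hu
  obtain ⟨c, rfl⟩ := Ideal.mem_span_singleton'.mp ha
  have hmem : v k * x * (1 - c * m) ∈ Ideal.span {v k} :=
    Ideal.mul_mem_right _ _ (Ideal.mul_mem_right _ _ (Ideal.mem_span_singleton_self _))
  have hmem' : v k * x * (1 - c * m) ∈ ⨆ (j) (_ : j ≠ k), Ideal.span {v j} := by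
    have : v k * x * (1 - c * m) = r * (x * m) := by linear_combination h
    exact this ▸ Ideal.mul_mem_right _ _ hr
  have hunit : IsUnit (1 - c * m) :=
    isUnit_one_sub_self_of_mem_nonunits _ (Ideal.mul_mem_left _ c hm)
  exact hunit.mul_left_eq_zero.mp (Submodule.disjoint_def.mp (hv k) _ hmem hmem')

end LocalRing

section DirectSumOfCyclics

variable {R : Type} [CommRing R] [IsLocalRing R]

theorem le_torsionOf_of_isDirectSumOfCyclics {Q : Ideal R} (hQ : IsDirectSumOfCyclics Q)
    {x : R} (hx : x ∈ maximalIdeal R) (h : ∀ y ∈ Q, ∃ u ∈ Q, y * x = u * x * x) :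
    Q ≤ Ideal.torsionOf R R x := by
  obtain ⟨κ, v, hvQ, hv, rfl⟩ := hQ
  refine iSup_le fun k => (Ideal.span_singleton_le_iff_mem _).mpr ?_
  obtain ⟨u, hu, hvk⟩ := h (v k) (hvQ k)
  rw [Ideal.mem_torsionOf_iff, smul_eq_mul]
  exact mul_eq_zero_of_mul_eq_mul_mul hv hx hu hvk

theorem eq_bot_of_le_span_mul_of_isDirectSumOfCyclics_comap {x : R} (hx : x ∈ maximalIdeal R)
    {J : Ideal (R ⧸ Ideal.torsionOf R R x)}
    (hJ : IsDirectSumOfCyclics (J.comap (Ideal.Quotient.mk _)))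
    (hle : J ≤ Ideal.span {Ideal.Quotient.mk _ x} * J) : J = ⊥ := by
  set π := Ideal.Quotient.mk (Ideal.torsionOf R R x)
  have hQ : J.comap π ≤ Ideal.torsionOf R R x := by
    refine le_torsionOf_of_isDirectSumOfCyclics hJ hx fun y hy => ?_
    obtain ⟨z, hz, hzy⟩ := Ideal.mem_span_singleton_mul.mp (hle hy)
    obtain ⟨u, rfl⟩ := Ideal.Quotient.mk_surjective z
    refine ⟨u, hz, ?_⟩
    have hyu : y - x * u ∈ Ideal.torsionOf R R x :=
      Ideal.Quotient.eq.mp (by rw [map_mul]; exact hzy.symm)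
    rw [Ideal.mem_torsionOf_iff, smul_eq_mul] at hyu
    linear_combination hyu
  rw [← Ideal.map_comap_of_surjective π Ideal.Quotient.mk_surjective J, eq_bot_iff]
  exact (Ideal.map_mono hQ).trans (Ideal.map_quotient_self _).le

theorem isPrincipalIdealRing_quotient_torsionOf
    (h : ∀ P : Ideal R, P.IsPrime → IsDirectSumOfCyclics P) {x : R} (hx : x ∈ maximalIdeal R)
    (hmax : (maximalIdeal R).map (Ideal.Quotient.mk (Ideal.torsionOf R R x)) =
      Ideal.span {Ideal.Quotient.mk _ x}) :
    IsPrincipalIdealRing (R ⧸ Ideal.torsionOf R R x) := by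
  set π := Ideal.Quotient.mk (Ideal.torsionOf R R x)
  cases subsingleton_or_nontrivial (R ⧸ Ideal.torsionOf R R x)
  · infer_instance
  have : IsLocalRing (R ⧸ Ideal.torsionOf R R x) := .of_surjective' π Ideal.Quotient.mk_surjective
  rw [map_maximalIdeal_of_surjective π Ideal.Quotient.mk_surjective] at hmax
  refine isPrincipalIdealRing_of_iInf_span_pow_eq_bot hmax ?_
  by_cases hnil : ∃ n, π x ^ n = 0
  · obtain ⟨n, hn⟩ := hnil
    exact eq_bot_iff.mpr ((iInf_le _ n).trans (by simp [hn]))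
  push Not at hnil
  have hJ := isPrime_iInf_span_pow hmax hnil
  have hπx : π x ∈ maximalIdeal _ := hmax ▸ Ideal.mem_span_singleton_self _
  refine eq_bot_of_le_span_mul_of_isDirectSumOfCyclics_comap hx (h _ (hJ.comap π)) ?_
  refine le_span_singleton_mul_of_isPrime hJ ((iInf_le _ 1).trans (by rw [pow_one])) ?_
  simpa using pow_notMem_iInf_span_pow hπx (hnil 1)

end DirectSumOfCyclics

theorem maximal_ideal_decomposition_of_primes_direct_sum
    {R : Type} [CommRing R] [IsLocalRing R]
    (h : ∀ P : Ideal R, P.IsPrime → IsDirectSumOfCyclics P) :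
    ∃ (ι : Type) (w : ι → R), (∀ i, w i ∈ IsLocalRing.maximalIdeal R) ∧
      iSupIndep (fun i => Ideal.span {w i}) ∧
      (⨆ i, Ideal.span {w i}) = IsLocalRing.maximalIdeal R ∧
      ∀ i, IsPrincipalIdealRing (R ⧸ Ideal.torsionOf R R (w i)) := by
  obtain ⟨ι, w, hw, hindep, hsup⟩ := h _ (maximalIdeal.isMaximal R).isPrime
  refine ⟨ι, w, hw, hindep, hsup, fun i => isPrincipalIdealRing_quotient_torsionOf h (hw i) ?_⟩
  rw [← hsup, map_iSup_span_quotient_torsionOf hindep]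
end

section
/- Let (R, M) be a commutative local ring. Suppose M = ⊕_{λ∈Λ} Rw_λ is an internal direct sum with R/Ann(w_λ) a principal ideal ring for each λ ∈ Λ. Then every prime ideal of R is a direct sum of at most |Λ| cyclic R-modules. -/
theorem primes_direct_sum_of_at_most_card_cyclics
    {R : Type} [CommRing R] [IsLocalRing R] {Λ : Type} (w : Λ → R)
    (hmem : ∀ l, w l ∈ IsLocalRing.maximalIdeal R)
    (hindep : iSupIndep (fun l => Ideal.span {w l}))
    (hsup : (⨆ l, Ideal.span {w l}) = IsLocalRing.maximalIdeal R)
    (hpir : ∀ l, IsPrincipalIdealRing (R ⧸ Ideal.torsionOf R R (w l)))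
    (P : Ideal R) (hP : P.IsPrime) :
    ∃ (ι : Type) (_ : ι ↪ Λ) (v : ι → R), (∀ i, v i ∈ P) ∧
      iSupIndep (fun i => Ideal.span {v i}) ∧ (⨆ i, Ideal.span {v i}) = P := by
  classical
  have hPle : P ≤ IsLocalRing.maximalIdeal R := IsLocalRing.le_maximalIdeal hP.ne_top
  by_cases hall : ∀ l, w l ∈ P
  · refine ⟨Λ, Function.Embedding.refl Λ, w, hall, hindep, ?_⟩
    have : P = IsLocalRing.maximalIdeal R :=
      le_antisymm hPle (by
        rw [← hsup]; exact iSup_le fun l => (Ideal.span_singleton_le_iff_mem _).2 (hall l))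
    rw [hsup, this]
  · push_neg at hall
    obtain ⟨l₀, hl₀⟩ := hall
    -- orthogonality and membership of the other generators
    have horth : ∀ μ, μ ≠ l₀ → w l₀ * w μ = 0 := by
      intro μ hμ
      have h1 : w l₀ * w μ ∈ Ideal.span {w l₀} :=
        Ideal.mul_mem_right _ _ (Ideal.mem_span_singleton_self _)
      have h2 : w l₀ * w μ ∈ ⨆ (ν) (_ : ν ≠ l₀), Ideal.span {w ν} := by
        refine le_iSup₂ (f := fun ν (_ : ν ≠ l₀) => Ideal.span {w ν}) μ hμ ?_
        exact Ideal.mul_mem_left _ _ (Ideal.mem_span_singleton_self _)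
      have := (hindep l₀).le_bot ⟨h1, h2⟩
      simpa using this
    have hwP : ∀ μ, μ ≠ l₀ → w μ ∈ P := by
      intro μ hμ
      rcases hP.mem_or_mem (show w l₀ * w μ ∈ P by rw [horth μ hμ]; exact P.zero_mem) with h | h
      · exact absurd h hl₀
      · exact h
    set T : Ideal R := ⨆ (ν) (_ : ν ≠ l₀), Ideal.span {w ν} with hT
    have hTP : T ≤ P := iSup₂_le fun ν hν => (Ideal.span_singleton_le_iff_mem _).2 (hwP ν hν)
    have hsplit : Ideal.span {w l₀} ⊔ T = ⨆ ν, Ideal.span {w ν} := by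
      apply le_antisymm
      · exact sup_le (le_iSup (fun ν => Ideal.span {w ν}) l₀) (iSup₂_le fun ν _ => le_iSup (fun ν => Ideal.span {w ν}) ν)
      · refine iSup_le fun ν => ?_
        by_cases h : ν = l₀
        · subst h; exact le_sup_left
        · exact le_trans (le_iSup₂ (f := fun ν (_ : ν ≠ l₀) => Ideal.span {w ν}) ν h) le_sup_right
    -- decomposition of P
    have hdecomp : P = (P ⊓ Ideal.span {w l₀}) ⊔ T := by
      apply le_antisymm
      · intro x hx
        have hxM : x ∈ Ideal.span {w l₀} ⊔ T := by
          rw [hsplit, hsup]; exact hPle hx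
        obtain ⟨a, ha, b, hb, rfl⟩ := Submodule.mem_sup.1 hxM
        have haP : a ∈ P := by
          have : a = a + b - b := by ring
          rw [this]; exact P.sub_mem hx (hTP hb)
        exact Submodule.mem_sup.2 ⟨a, ⟨haP, ha⟩, b, hb, rfl⟩
      · exact sup_le inf_le_left hTP
    -- the cyclic generator for P ⊓ span {w l₀}
    set φ : R →ₗ[R] R := LinearMap.toSpanSingleton R R (w l₀) with hφ
    set J : Ideal R := Submodule.comap φ P with hJ
    have hker : Ideal.torsionOf R R (w l₀) ≤ J := by
      intro a ha
      rw [Ideal.mem_torsionOf_iff] at ha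
      show φ a ∈ P
      simp only [hφ, LinearMap.toSpanSingleton_apply, ha]
      exact P.zero_mem
    haveI := hpir l₀
    obtain ⟨y', hy'⟩ := (IsPrincipalIdealRing.principal
      (J.map (Ideal.Quotient.mk (Ideal.torsionOf R R (w l₀))))).principal
    obtain ⟨y, rfl⟩ := Ideal.Quotient.mk_surjective y'
    have hycomap : Ideal.comap (Ideal.Quotient.mk (Ideal.torsionOf R R (w l₀)))
        (J.map (Ideal.Quotient.mk (Ideal.torsionOf R R (w l₀)))) = J := by
      rw [Ideal.comap_map_of_surjective _ Ideal.Quotient.mk_surjective]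
      rw [← RingHom.ker_eq_comap_bot, Ideal.mk_ker]
      exact sup_eq_left.2 hker
    have hyJ : y ∈ J := by
      rw [← hycomap]
      exact Ideal.mem_comap.2 (hy' ▸ Ideal.subset_span rfl)
    have hQ : P ⊓ Ideal.span {w l₀} = Ideal.span {y * w l₀} := by
      apply le_antisymm
      · rintro x ⟨hxP, hxs⟩
        obtain ⟨a, rfl⟩ := Ideal.mem_span_singleton'.1 hxs
        have haJ : a ∈ J := hxP
        have : Ideal.Quotient.mk (Ideal.torsionOf R R (w l₀)) a ∈
            Ideal.span {Ideal.Quotient.mk (Ideal.torsionOf R R (w l₀)) y} := by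
          have h0 := Ideal.mem_map_of_mem (Ideal.Quotient.mk (Ideal.torsionOf R R (w l₀))) haJ
          rwa [hy'] at h0
        obtain ⟨c', hc'⟩ := Ideal.mem_span_singleton'.1 this
        obtain ⟨c, rfl⟩ := Ideal.Quotient.mk_surjective c'
        have : a - c * y ∈ Ideal.torsionOf R R (w l₀) := by
          rw [← Ideal.Quotient.eq_zero_iff_mem, map_sub, map_mul, hc', sub_self]
        rw [Ideal.mem_torsionOf_iff, smul_eq_mul, sub_mul, sub_eq_zero] at this
        rw [this]
        exact Ideal.mem_span_singleton'.2 ⟨c, by ring⟩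
      · rw [Ideal.span_singleton_le_iff_mem]
        refine ⟨hyJ, ?_⟩
        exact Ideal.mem_span_singleton'.2 ⟨y, rfl⟩
    -- assemble
    set v : Λ → R := fun l => if l = l₀ then y * w l₀ else w l with hv
    have hvle : ∀ l, Ideal.span {v l} ≤ Ideal.span {w l} := by
      intro l
      by_cases h : l = l₀
      · subst h
        simp only [hv, if_pos rfl]
        rw [Ideal.span_singleton_le_iff_mem]
        exact Ideal.mem_span_singleton'.2 ⟨y, rfl⟩
      · simp [hv, if_neg h]
    refine ⟨Λ, Function.Embedding.refl Λ, v, ?_, hindep.mono hvle, ?_⟩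
    · intro l
      by_cases h : l = l₀
      · subst h; simp only [hv, if_pos rfl]
        exact hyJ
      · simp only [hv, if_neg h]; exact hwP l h
    · apply le_antisymm
      · exact iSup_le fun l => (Ideal.span_singleton_le_iff_mem _).2 (by
          by_cases h : l = l₀
          · subst h; simp only [hv, if_pos rfl]; exact hyJ
          · simp only [hv, if_neg h]; exact hwP l h)
      · rw [hdecomp, hQ]
        refine sup_le ?_ (iSup₂_le fun ν hν => ?_)
        · have : (Ideal.span {y * w l₀} : Ideal R) = Ideal.span {v l₀} := by
            simp [hv]
          rw [this]; exact le_iSup (fun i => Ideal.span {v i}) l₀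
        · have : (Ideal.span {w ν} : Ideal R) = Ideal.span {v ν} := by
            simp [hv, if_neg hν]
          rw [this]; exact le_iSup (fun i => Ideal.span {v i}) ν
end

section
/- Let (R, M) be a commutative local ring such that M = Rx is principal. If every prime ideal of R is a direct sum of cyclic R-modules, then every non-maximal prime ideal of R is zero; in particular, if R has a non-maximal prime, then R is a principal ideal domain. -/
open IsLocalRing Submodule

section

variable {R M : Type*} [CommRing R] [IsLocalRing R] [AddCommGroup M] [Module R M]

theorem eq_zero_of_mem_maximalIdeal_smul_sup {w : M} {S : Submodule R M}
    (hdisj : Disjoint (R ∙ w) S) (hw : w ∈ maximalIdeal R • (R ∙ w ⊔ S)) : w = 0 := by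
  have hle : maximalIdeal R • (R ∙ w ⊔ S) ≤ maximalIdeal R • (R ∙ w) ⊔ S :=
    (smul_sup (maximalIdeal R) (R ∙ w) S).le.trans (sup_le_sup_left smul_le_right _)
  obtain ⟨v, hv, s, hs, hvs⟩ := mem_sup.mp (hle hw)
  obtain ⟨a, ha, rfl⟩ := (mem_smul_span_singleton (I := maximalIdeal R)).mp hv
  have hsw : (1 - a) • w = s := by
    rw [sub_smul, one_smul, sub_eq_iff_eq_add', hvs]
  have hs0 : (1 - a) • w = 0 :=
    (mem_bot R).mp <| hdisj.eq_bot ▸ ⟨smul_mem _ _ (mem_span_singleton_self w), hsw ▸ hs⟩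
  exact ((isUnit_one_sub_self_of_mem_nonunits a ha).smul_eq_zero).mp hs0

theorem eq_bot_of_le_maximalIdeal_smul_of_iSupIndep {ι : Type*} {w : ι → M} {N : Submodule R M}
    (hind : iSupIndep fun i => R ∙ w i) (hsup : ⨆ i, R ∙ w i = N)
    (hN : N ≤ maximalIdeal R • N) : N = ⊥ := by
  have hw : ∀ i, w i = 0 := by
    intro i
    refine eq_zero_of_mem_maximalIdeal_smul_sup (hind i) ?_
    rw [← iSup_split_single (fun i => R ∙ w i) i, hsup]
    exact hN (hsup ▸ mem_iSup_of_mem i (mem_span_singleton_self _))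
  simp [← hsup, hw]

end

theorem Ideal.IsPrime.le_span_singleton_mul {R : Type*} [CommRing R] {P : Ideal R} (hP : P.IsPrime)
    {x : R} (hPx : P ≤ Ideal.span {x}) (hx : x ∉ P) : P ≤ Ideal.span {x} * P := by
  intro p hp
  obtain ⟨r, rfl⟩ := Ideal.mem_span_singleton'.mp (hPx hp)
  exact Ideal.mem_span_singleton_mul.mpr ⟨r, (hP.mem_or_mem hp).resolve_right hx, mul_comm _ _⟩

theorem nonmaximal_primes_zero_of_principal_maximal_ideal
    {R : Type} [CommRing R] [IsLocalRing R] (x : R)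
    (hx : IsLocalRing.maximalIdeal R = Ideal.span {x})
    (h : ∀ P : Ideal R, P.IsPrime → IsDirectSumOfCyclics P) :
    (∀ P : Ideal R, P.IsPrime → ¬ P.IsMaximal → P = ⊥) ∧
    ((∃ P : Ideal R, P.IsPrime ∧ ¬ P.IsMaximal) →
      IsPrincipalIdealRing R ∧ IsDomain R) := by
  have hbot : ∀ P : Ideal R, P.IsPrime → ¬ P.IsMaximal → P = ⊥ := by
    intro P hP hPm
    obtain ⟨ι, w, -, hind, hsup⟩ := h P hP
    have hxP : x ∉ P := fun hxP => hPm <|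
      (maximalIdeal.isMaximal R).eq_of_le hP.ne_top
        (hx ▸ (Ideal.span_singleton_le_iff_mem P).mpr hxP) ▸ maximalIdeal.isMaximal R
    refine eq_bot_of_le_maximalIdeal_smul_of_iSupIndep hind hsup ?_
    exact hx ▸ hP.le_span_singleton_mul (hx ▸ le_maximalIdeal hP.ne_top) hxP
  refine ⟨hbot, fun ⟨P, hP, hPm⟩ => ?_⟩
  have : (⊥ : Ideal R).IsPrime := hbot P hP hPm ▸ hP
  have := IsDomain.of_bot_isPrime R
  refine ⟨IsPrincipalIdealRing.of_prime fun Q hQ => ?_, inferInstance⟩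
  by_cases hQm : Q.IsMaximal
  · rw [eq_maximalIdeal hQm, hx]
    exact ⟨x, rfl⟩
  · rw [hbot Q hQ hQm]
    exact bot_isPrincipal
end

section
/- Let (R, M) be a commutative local ring with M = ⊕_{λ∈Λ} Rw_λ an internal direct sum with |Λ| ≥ 2, and suppose every prime ideal of R is a direct sum of cyclic R-modules. Then every non-maximal prime ideal P of R equals ⊕_{λ∈Λ∖{λ₀}} Rw_λ for some λ₀ ∈ Λ with w_{λ₀} ∉ P. -/
/-! Distinct generators multiply to zero, so a prime `P` missing `w := w l₀` contains
`Q = ⨆ l ≠ l₀, R w_l`, and as `M = R w ⊕ Q` every `x ∈ P` is `a w + q` with `a ∈ P` and `w q = 0`.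
Hence `w P ⊆ w² P`. For a direct sum of cyclics `P = ⊕ R v_i` this forces `w P = 0`: comparing
`v_i`-components of `w v_i = w² a` gives `(1 - w c) w v_i = 0`, and `1 - w c` is a unit.
Finally `x = a w + q = q` for `x ∈ P`. -/

open Submodule Set

theorem iSupIndep.smul_eq_smul_of_linearCombination_eq {R M ι : Type*} [Ring R]
    [AddCommGroup M] [Module R M] {v : ι → M} (hv : iSupIndep fun i => R ∙ v i) {c d : ι →₀ R}
    (h : Finsupp.linearCombination R v c = Finsupp.linearCombination R v d) (i : ι) :
    c i • v i = d i • v i := by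
  classical
  set s := insert i (c.support ∪ d.support)
  have hsum (e : ι →₀ R) (he : e.support ⊆ s) :
      Finsupp.linearCombination R v e = ∑ j ∈ s, e j • v j :=
    Finsupp.linearCombination_apply_of_mem_supported R he
  refine (iSupIndep_iff_finsetSum_eq_imp_eq _).1 hv s (fun j => c j • v j) (fun j => d j • v j)
    (fun j _ => ⟨smul_mem _ _ (mem_span_singleton_self _), smul_mem _ _ (mem_span_singleton_self _)⟩)
    ?_ i (Finset.mem_insert_self _ _)
  rwa [← hsum c, ← hsum d]
  · exact fun j hj => Finset.mem_insert_of_mem (Finset.mem_union_right _ hj)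
  · exact fun j hj => Finset.mem_insert_of_mem (Finset.mem_union_left _ hj)

theorem iSupIndep.smul_eq_zero_of_smul_eq_sq_smul {R M ι : Type*} [CommRing R]
    [AddCommGroup M] [Module R M] {v : ι → M} (hv : iSupIndep fun i => R ∙ v i) {r : R}
    (hr : r ∈ Ideal.jacobson ⊥)
    (h : ∀ x ∈ span R (range v), ∃ a ∈ span R (range v), r • x = r ^ 2 • a)
    {x : M} (hx : x ∈ span R (range v)) : r • x = 0 := by
  have hgen (i : ι) : r • v i = 0 := by
    obtain ⟨a, ha, hra⟩ := h (v i) (subset_span ⟨i, rfl⟩)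
    rw [← Finsupp.range_linearCombination] at ha
    obtain ⟨d, rfl⟩ := ha
    have hi : r • v i = (r ^ 2 * d i) • v i := by
      simpa using hv.smul_eq_smul_of_linearCombination_eq (c := Finsupp.single i r)
        (d := r ^ 2 • d) (by simpa using hra) i
    have hunit : IsUnit (r * -d i + 1) := Ideal.mem_jacobson_bot.1 hr _
    refine hunit.smul_eq_zero.1 ?_
    calc (r * -d i + 1) • r • v i = r • v i - (r ^ 2 * d i) • v i := by module
      _ = 0 := by rw [hi, sub_self]
  induction hx using span_induction with
  | mem y hy => obtain ⟨i, rfl⟩ := hy; exact hgen i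
  | zero => exact smul_zero r
  | add y z _ _ hy hz => rw [smul_add, hy, hz, add_zero]
  | smul s y _ hy => rw [smul_comm, hy, smul_zero]

theorem iSupIndep.mul_eq_zero_of_ne {R ι : Type*} [CommSemiring R] {w : ι → R}
    (h : iSupIndep fun l => Ideal.span {w l}) {l m : ι} (hlm : l ≠ m) : w l * w m = 0 :=
  Ideal.mem_bot.1 <| (h.pairwiseDisjoint hlm).le_bot
    ⟨Ideal.mul_mem_right _ _ (Ideal.mem_span_singleton_self _),
      Ideal.mul_mem_left _ _ (Ideal.mem_span_singleton_self _)⟩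

theorem Ideal.IsPrime.exists_mem_mul_add_of_mem_span_singleton_sup {R : Type*} [CommRing R]
    {P Q : Ideal R} (hP : P.IsPrime) {w : R} (hw : w ∉ P) (hQ : Q ≤ P) {x : R}
    (hx : x ∈ Ideal.span {w} ⊔ Q) (hxP : x ∈ P) : ∃ a ∈ P, ∃ q ∈ Q, a * w + q = x := by
  obtain ⟨y, hy, q, hq, rfl⟩ := Submodule.mem_sup.1 hx
  obtain ⟨a, rfl⟩ := Ideal.mem_span_singleton'.1 hy
  refine ⟨a, (hP.mem_or_mem ?_).resolve_right hw, q, hq, rfl⟩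
  simpa using P.sub_mem hxP (hQ hq)

theorem nonmaximal_prime_eq_complement_summand_general
    {R : Type} [CommRing R] [IsLocalRing R] {Λ : Type}
    (w : Λ → R)
    (hmem : ∀ l, w l ∈ IsLocalRing.maximalIdeal R)
    (hindep : iSupIndep (fun l => Ideal.span {w l}))
    (hsup : (⨆ l, Ideal.span {w l}) = IsLocalRing.maximalIdeal R)
    (h : ∀ P : Ideal R, P.IsPrime → IsDirectSumOfCyclics P)
    (P : Ideal R) (hP : P.IsPrime) (hPm : ¬ P.IsMaximal) :
    ∃ l₀ : Λ, w l₀ ∉ P ∧ (⨆ l ∈ ({l₀}ᶜ : Set Λ), Ideal.span {w l}) = P := by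
  have hPM : P ≤ IsLocalRing.maximalIdeal R := IsLocalRing.le_maximalIdeal hP.ne_top
  obtain ⟨l₀, hl₀⟩ : ∃ l₀, w l₀ ∉ P := by
    by_contra! hall
    refine hPm (le_antisymm hPM ?_ ▸ IsLocalRing.maximalIdeal.isMaximal R)
    exact hsup ▸ iSup_le fun l => (Ideal.span_singleton_le_iff_mem _).2 (hall l)
  set Q := ⨆ l ∈ ({l₀}ᶜ : Set Λ), Ideal.span {w l}
  have hQP : Q ≤ P := iSup₂_le fun l hl => (Ideal.span_singleton_le_iff_mem _).2 <|
    (hP.mem_or_mem (hindep.mul_eq_zero_of_ne hl ▸ P.zero_mem)).resolve_right hl₀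
  have hQann : Q ≤ LinearMap.ker (LinearMap.mulLeft R (w l₀)) :=
    iSup₂_le fun l hl => (Ideal.span_singleton_le_iff_mem _).2 <|
      hindep.mul_eq_zero_of_ne (Ne.symm hl)
  have hMQ : IsLocalRing.maximalIdeal R = Ideal.span {w l₀} ⊔ Q :=
    hsup ▸ iSup_split_single _ l₀
  have hdecomp (x : R) (hx : x ∈ P) : ∃ a ∈ P, ∃ q ∈ Q, a * w l₀ + q = x :=
    hP.exists_mem_mul_add_of_mem_span_singleton_sup hl₀ hQP (hMQ ▸ hPM hx) hx
  obtain ⟨ι, v, -, hvind, hvsup⟩ := h P hP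
  have hvP : span R (range v) = P := span_range_eq_iSup.trans hvsup
  have hwP (x : R) (hx : x ∈ P) : w l₀ * x = 0 := by
    refine hvind.smul_eq_zero_of_smul_eq_sq_smul
      (IsLocalRing.maximalIdeal_le_jacobson _ (hmem l₀)) ?_ (hvP ▸ hx)
    rw [hvP]
    intro y hy
    obtain ⟨a, ha, q, hq, rfl⟩ := hdecomp y hy
    have hwq : w l₀ * q = 0 := hQann hq
    exact ⟨a, ha, by rw [smul_eq_mul, smul_eq_mul, mul_add, hwq, add_zero]; ring⟩
  refine ⟨l₀, hl₀, le_antisymm hQP fun x hx => ?_⟩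
  obtain ⟨a, ha, q, hq, rfl⟩ := hdecomp x hx
  rwa [mul_comm, hwP a ha, zero_add]

theorem nonmaximal_prime_eq_complement_summand
    {R : Type} [CommRing R] [IsLocalRing R] {Λ : Type} [Nontrivial Λ]
    (w : Λ → R) (hw : ∀ l, w l ≠ 0)
    (hmem : ∀ l, w l ∈ IsLocalRing.maximalIdeal R)
    (hindep : iSupIndep (fun l => Ideal.span {w l}))
    (hsup : (⨆ l, Ideal.span {w l}) = IsLocalRing.maximalIdeal R)
    (h : ∀ P : Ideal R, P.IsPrime → IsDirectSumOfCyclics P)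
    (P : Ideal R) (hP : P.IsPrime) (hPm : ¬ P.IsMaximal) :
    ∃ l₀ : Λ, w l₀ ∉ P ∧ (⨆ l ∈ ({l₀}ᶜ : Set Λ), Ideal.span {w l}) = P :=
  nonmaximal_prime_eq_complement_summand_general w hmem hindep hsup h P hP hPm
end

section
/- Let (R, M) be a commutative Noetherian local ring. Then every prime ideal of R is a direct sum of cyclic R-modules if and only if the maximal ideal M is a direct sum of (finitely many) cyclic R-modules. -/
/-!
Write `M = ⨁ R wᵢ` and let `P` be a prime. If every `wᵢ` lies in `P`, then `P = M`. Otherwise some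
`w = wᵢ₀ ∉ P`; independence forces `wⱼ w = 0`, hence `wⱼ ∈ P`, for `j ≠ i₀`, so `S = ⨁_{j ≠ i₀} R wⱼ`
lies in `P` and `M = S + R w`. Every `x ∈ P` is then `s + r w` with `r w ∈ P`, hence `r ∈ P`, i.e.
`P ≤ S + w P`, and Nakayama gives `P = S`, again a direct sum of cyclics.
-/

open IsLocalRing Ideal

theorem iSupIndep.mul_eq_zero_of_ne_s14 {R ι : Type*} [CommRing R] {w : ι → R}
    (h : iSupIndep fun i => span {w i}) {i j : ι} (hij : i ≠ j) : w i * w j = 0 :=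
  (h.pairwiseDisjoint hij).le_bot
    ⟨mul_mem_right _ _ (mem_span_singleton_self _), mul_mem_left _ _ (mem_span_singleton_self _)⟩

theorem Ideal.IsPrime.eq_of_le_sup_span_singleton {R : Type*} [CommRing R] {P S : Ideal R}
    [hP : P.IsPrime] (hPfg : P.FG) (hSP : S ≤ P) {w : R} (hwP : w ∉ P) (hwJ : w ∈ jacobson ⊥)
    (hPle : P ≤ S ⊔ span {w}) : S = P := by
  refine le_antisymm hSP (Submodule.le_of_le_smul_of_le_jacobson_bot hPfg
    ((span_singleton_le_iff_mem _).2 hwJ) fun x hx => ?_)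
  obtain ⟨s, hs, t, ht, rfl⟩ := Submodule.mem_sup.1 (hPle hx)
  obtain ⟨r, rfl⟩ := mem_span_singleton'.1 ht
  have hrP : r ∈ P :=
    (hP.mem_or_mem (by simpa using P.sub_mem hx (hSP hs))).resolve_right hwP
  rw [mul_comm, smul_eq_mul]
  exact Submodule.add_mem_sup hs (mul_mem_mul (mem_span_singleton_self w) hrP)

theorem primes_direct_sum_iff_maximal_direct_sum
    {R : Type} [CommRing R] [IsLocalRing R] [IsNoetherianRing R] :
    (∀ P : Ideal R, P.IsPrime → IsDirectSumOfCyclics P) ↔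
      IsDirectSumOfCyclics (IsLocalRing.maximalIdeal R) := by
  refine ⟨fun h => h _ (maximalIdeal.isMaximal R).isPrime, ?_⟩
  rintro ⟨ι, w, hmem, hindep, hsup⟩ P hP
  by_cases hall : ∀ i, w i ∈ P
  · have hMP : maximalIdeal R ≤ P :=
      hsup ▸ iSup_le fun i => (span_singleton_le_iff_mem P).2 (hall i)
    rw [← (maximalIdeal.isMaximal R).eq_of_le hP.ne_top hMP]
    exact ⟨ι, w, hmem, hindep, hsup⟩
  obtain ⟨i₀, hi₀⟩ := not_forall.1 hall
  have hwP : ∀ j ≠ i₀, w j ∈ P := fun j hj =>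
    (hP.mem_or_mem (hindep.mul_eq_zero_of_ne_s14 hj ▸ P.zero_mem)).resolve_right hi₀
  set S := ⨆ j : {j // j ≠ i₀}, span {w j}
  have hSP : S ≤ P := iSup_le fun j => (span_singleton_le_iff_mem P).2 (hwP j j.2)
  have hM : maximalIdeal R = S ⊔ span {w i₀} := by
    rw [← hsup, iSup_split_single _ i₀, sup_comm, iSup_subtype']
  have hSeq : S = P := hP.eq_of_le_sup_span_singleton (IsNoetherian.noetherian P) hSP hi₀
    (maximalIdeal_le_jacobson ⊥ (hmem i₀)) (hM ▸ le_maximalIdeal hP.ne_top)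
  exact ⟨_, fun j : {j // j ≠ i₀} => w j, fun j => hwP j j.2,
    hindep.comp Subtype.val_injective, hSeq⟩
end

section
/- Let (R, M) be a commutative Noetherian local ring such that M = ⊕_{i=1}^n Rw_i is an internal direct sum with n ≥ 2, and let P ⊊ M be a prime ideal with w_1 ∉ P. Then P = ⊕_{i=2}^n Rw_i and P w_1 = 0. -/
theorem prime_eq_complement_of_first_generator
    {R : Type} [CommRing R] [IsLocalRing R] [IsNoetherianRing R]
    {n : ℕ} (hn : 2 ≤ n) (w : Fin n → R)
    (hmem : ∀ i, w i ∈ IsLocalRing.maximalIdeal R)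
    (hindep : iSupIndep (fun i => Ideal.span {w i}))
    (hsup : (⨆ i, Ideal.span {w i}) = IsLocalRing.maximalIdeal R)
    (P : Ideal R) (hP : P.IsPrime) (hlt : P < IsLocalRing.maximalIdeal R)
    (hw1 : w ⟨0, by omega⟩ ∉ P) :
    (⨆ i ∈ ({⟨0, by omega⟩}ᶜ : Set (Fin n)), Ideal.span {w i}) = P ∧
      ∀ p ∈ P, p * w ⟨0, by omega⟩ = 0 := by
  set i0 : Fin n := ⟨0, by omega⟩ with hi0
  set M := IsLocalRing.maximalIdeal R with hM
  set Q : Ideal R := ⨆ i ∈ ({i0}ᶜ : Set (Fin n)), Ideal.span {w i} with hQ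
  -- Step 1: w i * w i0 = 0 for i ≠ i0
  have hkill : ∀ i : Fin n, i ≠ i0 → w i * w i0 = 0 := by
    intro i hi
    have h1 : w i * w i0 ∈ Ideal.span {w i} :=
      Ideal.mul_mem_right _ _ (Ideal.subset_span rfl)
    have h2 : w i * w i0 ∈ (⨆ (j) (_ : j ≠ i), Ideal.span {w j} : Ideal R) := by
      have : w i * w i0 ∈ Ideal.span {w i0} :=
        Ideal.mul_mem_left _ _ (Ideal.subset_span rfl)
      exact Submodule.mem_iSup_of_mem i0 (Submodule.mem_iSup_of_mem (Ne.symm hi) this)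
    exact (Submodule.mem_bot R).mp ((hindep i).le_bot ⟨h1, h2⟩)
  -- Q annihilates w i0
  have hQ0 : ∀ q ∈ Q, q * w i0 = 0 := by
    have hle : Q ≤ LinearMap.ker (LinearMap.mulLeft R (w i0)) := by
      refine iSup₂_le fun i hi => ?_
      rw [Ideal.span_le]
      rintro x rfl
      simp only [SetLike.mem_coe, LinearMap.mem_ker, LinearMap.mulLeft_apply]
      rw [mul_comm]
      exact hkill i hi
    intro q hq
    have := hle hq
    rw [LinearMap.mem_ker, LinearMap.mulLeft_apply] at this
    rw [mul_comm]; exact this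
  -- Q ≤ P
  have hQP : Q ≤ P := by
    refine iSup₂_le fun i hi => ?_
    rw [Ideal.span_le]
    rintro x rfl
    have h0 : w i * w i0 ∈ P := by rw [hkill i hi]; exact P.zero_mem
    rcases hP.mem_or_mem h0 with h | h
    · exact h
    · exact absurd h hw1
  -- M = span {w i0} ⊔ Q
  have hsplit : Ideal.span {w i0} ⊔ Q = M := by
    rw [← hsup]
    apply le_antisymm
    · refine sup_le (le_iSup (fun j => Ideal.span {w j}) i0) (iSup₂_le fun i _ => le_iSup (fun j => Ideal.span {w j}) i)
    · refine iSup_le fun i => ?_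
      by_cases h : i = i0
      · subst h; exact le_sup_of_le_left le_rfl
      · exact le_sup_of_le_right (le_iSup₂_of_le i h le_rfl)
  -- every p ∈ P satisfies p * w i0 ∈ M ^ k for all k
  have hpow : ∀ k : ℕ, ∀ r ∈ P, r * w i0 ∈ M ^ k := by
    intro k
    induction k with
    | zero => intro r _; simp
    | succ k ih =>
      intro r hr
      have hrM : r ∈ M := hlt.le hr
      rw [← hsplit] at hrM
      obtain ⟨a, ha, q, hq, hsum⟩ := Submodule.mem_sup.mp hrM
      obtain ⟨b, rfl⟩ := Ideal.mem_span_singleton'.mp ha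
      have hq0 : q * w i0 = 0 := hQ0 q hq
      have heq : r * w i0 = (b * w i0) * w i0 := by
        rw [← hsum]; ring_nf; rw [mul_comm (w i0) q, hq0]; ring
      have hbP : b * w i0 ∈ P := by
        have hrP : r * w i0 ∈ P := P.mul_mem_right _ hr
        rw [heq] at hrP
        rcases hP.mem_or_mem hrP with h | h
        · exact h
        · exact absurd h hw1
      have hbP' : b ∈ P := by
        rcases hP.mem_or_mem hbP with h | h
        · exact h
        · exact absurd h hw1
      have : b * w i0 ∈ M ^ k := ih b hbP'
      rw [heq, pow_succ]
      exact Ideal.mul_mem_mul this (hmem i0)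
  have hzero : ∀ p ∈ P, p * w i0 = 0 := by
    intro p hp
    have hMne : M ≠ ⊤ := (IsLocalRing.maximalIdeal.isMaximal R).ne_top
    have hbot := Ideal.iInf_pow_eq_bot_of_isLocalRing M hMne
    have : p * w i0 ∈ (⨅ k : ℕ, M ^ k) := Submodule.mem_iInf _ |>.mpr fun k => hpow k p hp
    rw [hbot] at this
    exact (Submodule.mem_bot R).mp this
  refine ⟨le_antisymm hQP ?_, hzero⟩
  intro p hp
  have hpM : p ∈ M := hlt.le hp
  rw [← hsplit] at hpM
  obtain ⟨a, ha, q, hq, hsum⟩ := Submodule.mem_sup.mp hpM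
  have haP : a ∈ P := by
    have : a = p - q := by rw [← hsum]; ring
    rw [this]; exact P.sub_mem hp (hQP hq)
  obtain ⟨b, rfl⟩ := Ideal.mem_span_singleton'.mp ha
  have hbP : b ∈ P := by
    rcases hP.mem_or_mem haP with h | h
    · exact h
    · exact absurd h hw1
  have : b * w i0 = 0 := hzero b hbP
  rw [← hsum, this, zero_add]
  exact hq
end

section
/- Let R = ∏_{λ∈Λ} F_λ be a product of fields over an infinite index set Λ. Then there exists a maximal ideal P of R containing the ideal ⊕_{λ∈Λ} F_λ, and any such P is not a direct sum of principal ideals of R. -/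
open Ideal Filter Set

theorem Set.Infinite.exists_subset_infinite_diff_infinite {α : Type*} {s : Set α}
    (hs : s.Infinite) : ∃ t ⊆ s, t.Infinite ∧ (s \ t).Infinite := by
  obtain ⟨t, u, rfl, htu, hcard⟩ := hs.exists_union_disjoint_cardinal_eq_of_infinite
  have hfin : t.Finite ↔ u.Finite := by
    rw [← Cardinal.lt_aleph0_iff_set_finite, ← Cardinal.lt_aleph0_iff_set_finite, hcard]
  refine ⟨t, subset_union_left, fun ht => hs (ht.union (hfin.mp ht)), ?_⟩
  rw [union_sdiff_left, htu.symm.sdiff_eq_left]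
  exact fun hu => hs ((hfin.mpr hu).union hu)

namespace iSupIndep

variable {R ι : Type*} [CommRing R] {w : ι → R}

theorem mul_eq_zero_of_mem_iSup_ne (hw : iSupIndep fun i => span {w i}) {i : ι} {x : R}
    (hx : x ∈ ⨆ (j) (_ : j ≠ i), span {w j}) : w i * x = 0 :=
  Submodule.disjoint_def.mp (hw i) _ (mul_mem_right _ _ (mem_span_singleton_self _))
    (mul_mem_left _ _ hx)

theorem mul_eq_zero_of_ne_s17 (hw : iSupIndep fun i => span {w i}) {i j : ι} (hij : i ≠ j) :
    w i * w j = 0 :=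
  hw.mul_eq_zero_of_mem_iSup_ne <|
    Submodule.mem_iSup_of_mem j <| Submodule.mem_iSup_of_mem hij.symm <| mem_span_singleton_self _

theorem finite_setOf_mul_ne_zero (hw : iSupIndep fun i => span {w i}) {x : R}
    (hx : x ∈ ⨆ i, span {w i}) : {i | w i * x ≠ 0}.Finite := by
  obtain ⟨s, hs⟩ := Submodule.mem_iSup_iff_exists_finset.mp hx
  refine s.finite_toSet.subset fun i hi => ?_
  by_contra his
  have hle : (⨆ j ∈ s, span {w j}) ≤ ⨆ (j) (_ : j ≠ i), span {w j} :=
    iSup₂_le fun j hj => le_iSup₂_of_le j (ne_of_mem_of_not_mem hj his) le_rfl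
  exact hi (hw.mul_eq_zero_of_mem_iSup_ne (hle hs))

end iSupIndep

section Pi

variable {Λ ι : Type*} (R : Λ → Type*) [∀ l, CommRing (R l)]

def eventuallyZeroIdeal (f : Filter Λ) : Ideal (∀ l, R l) where
  carrier := {a | ∀ᶠ l in f, a l = 0}
  zero_mem' := Eventually.of_forall fun _ => rfl
  add_mem' ha hb := (ha.and hb).mono fun l h => by simp [h.1, h.2]
  smul_mem' _ _ ha := ha.mono fun l h => by simp [h]

variable {R}

theorem mem_eventuallyZeroIdeal {f : Filter Λ} {a : ∀ l, R l} :
    a ∈ eventuallyZeroIdeal R f ↔ ∀ᶠ l in f, a l = 0 :=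
  Iff.rfl

theorem eventuallyZeroIdeal_ne_top (f : Filter Λ) [f.NeBot] [∀ l, Nontrivial (R l)] :
    eventuallyZeroIdeal R f ≠ ⊤ := by
  intro h
  have h1 : (1 : ∀ l, R l) ∈ eventuallyZeroIdeal R f := h ▸ Submodule.mem_top
  obtain ⟨l, hl⟩ := (mem_eventuallyZeroIdeal.mp h1).exists
  exact one_ne_zero hl

variable {w : ι → ∀ l, R l}

theorem apply_eq_zero_of_mem_iSup_span {x : ∀ l, R l} (hx : x ∈ ⨆ i, span {w i}) {l : Λ}
    (h : ∀ i, w i l = 0) : x l = 0 :=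
  (iSup_le fun i => (span_singleton_le_iff_mem _).mpr (h i) :
    ⨆ i, span {w i} ≤ RingHom.ker (Pi.evalRingHom R l)) hx

theorem iSupIndep.apply_eq_zero [∀ l, NoZeroDivisors (R l)] (hw : iSupIndep fun i => span {w i})
    {i j : ι} (hij : i ≠ j) {l : Λ} (hl : w i l ≠ 0) : w j l = 0 :=
  (mul_eq_zero.mp (congrFun (hw.mul_eq_zero_of_ne_s17 hij.symm) l)).resolve_right hl

theorem iSupIndep.finite_inter_or_finite_diff_of_isPrime [∀ l, NoZeroDivisors (R l)]
    (hw : iSupIndep fun i => span {w i}) (hP : (⨆ i, span {w i}).IsPrime) (A : Set ι) :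
    (A ∩ {i | w i ≠ 0}).Finite ∨ ({i | w i ≠ 0} \ A).Finite := by
  classical
  set S : Set Λ := {l | ∃ i ∈ A, w i l ≠ 0}
  set y : ∀ l, R l := S.piecewise 1 0
  have hy : y * (1 - y) = 0 := by
    funext l
    by_cases hl : l ∈ S <;> simp [y, hl]
  rcases hP.mem_or_mem (hy ▸ zero_mem _) with hyP | hyP
  · refine .inl <| (hw.finite_setOf_mul_ne_zero hyP).subset fun i ⟨hiA, hi⟩ h0 => ?_
    obtain ⟨l, hl⟩ := Function.ne_iff.mp hi
    have hlS : l ∈ S := ⟨i, hiA, hl⟩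
    exact hl (by simpa [y, hlS] using congrFun h0 l)
  · refine .inr <| (hw.finite_setOf_mul_ne_zero hyP).subset fun i ⟨hi, hiA⟩ h0 => ?_
    obtain ⟨l, hl⟩ := Function.ne_iff.mp hi
    have hlS : l ∉ S := fun ⟨j, hjA, hj⟩ =>
      hj (hw.apply_eq_zero (ne_of_mem_of_not_mem hjA hiA).symm hl)
    exact hl (by simpa [y, hlS] using congrFun h0 l)

end Pi

theorem iSupIndep.iSup_span_eq_top {Λ ι : Type*} {F : Λ → Type*} [∀ l, Field (F l)]
    {w : ι → ∀ l, F l} (hw : iSupIndep fun i => span {w i})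
    (hcover : ∀ l, ∃ i, w i l ≠ 0) (hfin : {i | w i ≠ 0}.Finite) : ⨆ i, span {w i} = ⊤ := by
  have hmem : ∑ i ∈ hfin.toFinset, w i ∈ ⨆ i, span {w i} :=
    sum_mem fun i _ => Submodule.mem_iSup_of_mem i (mem_span_singleton_self (w i))
  refine eq_top_of_isUnit_mem _ hmem (Pi.isUnit_iff.mpr fun l => ?_)
  obtain ⟨i, hi⟩ := hcover l
  have hiI : i ∈ hfin.toFinset := hfin.mem_toFinset.mpr fun h => hi (congrFun h l)
  rw [Finset.sum_apply,
    Finset.sum_eq_single_of_mem i hiI fun j _ hji => hw.apply_eq_zero hji.symm hi]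
  exact hi.isUnit

theorem product_of_fields_maximal_not_direct_sum
    {Λ : Type} [Infinite Λ] (F : Λ → Type) [∀ l, Field (F l)] :
    (∃ P : Ideal (∀ l, F l), P.IsMaximal ∧
        ∀ a : ∀ l, F l, {l | a l ≠ 0}.Finite → a ∈ P) ∧
    (∀ P : Ideal (∀ l, F l), P.IsMaximal →
        (∀ a : ∀ l, F l, {l | a l ≠ 0}.Finite → a ∈ P) →
        ¬ IsDirectSumOfCyclics P) := by
  refine ⟨?_, fun P hP hfin => ?_⟩
  · obtain ⟨P, hP, hle⟩ := exists_le_maximal _ (eventuallyZeroIdeal_ne_top (R := F) cofinite)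
    exact ⟨P, hP, fun a ha => hle (eventually_cofinite.mpr (by simpa using ha))⟩
  · rintro ⟨ι, w, -, hw, rfl⟩
    have hcover (l : Λ) : ∃ i, w i l ≠ 0 := by
      classical
      by_contra! h
      have hsingle : {l' | Pi.single l (1 : F l) l' ≠ 0}.Finite :=
        (finite_singleton l).subset fun l' hl' =>
          by_contra fun hne => hl' (Pi.single_eq_of_ne hne _)
      simpa using apply_eq_zero_of_mem_iSup_span (hfin _ hsingle) h
    have hinf : {i | w i ≠ 0}.Infinite := fun hI => hP.ne_top (hw.iSup_span_eq_top hcover hI)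
    obtain ⟨A, hAI, hA, hIA⟩ := hinf.exists_subset_infinite_diff_infinite
    rcases hw.finite_inter_or_finite_diff_of_isPrime hP.isPrime A with h | h
    · exact hA (by rwa [inter_eq_left.mpr hAI] at h)
    · exact hIA h
end

section
/- Let (R, M) be a commutative local ring and suppose M = ⊕_{λ∈Λ} Rw_λ with |Λ| ≥ 2 and each R/Ann(w_λ) a principal ideal ring. Then the set of prime ideals of R is exactly {M} ∪ { ⊕_{λ∈Λ∖{μ}} Rw_λ : μ ∈ Λ, w_μ ∉ Nil(R) }. -/
private theorem aux_key {R : Type} [CommRing R] [IsLocalRing R] {Λ : Type}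
    (w : Λ → R)
    (hsup : (⨆ l, Ideal.span {w l}) = IsLocalRing.maximalIdeal R)
    (hzero : ∀ l m : Λ, l ≠ m → w l * w m = 0)
    (μ : Λ) (hpirμ : IsPrincipalIdealRing (R ⧸ Ideal.torsionOf R R (w μ)))
    (hnil : w μ ∉ nilradical R) :
    Ideal.torsionOf R R (w μ) = (⨆ l ∈ ({μ}ᶜ : Set Λ), Ideal.span {w l}) ∧
    (Ideal.torsionOf R R (w μ)).IsPrime ∧
    (∀ P : Ideal R, P.IsPrime → w μ ∉ P → P ≤ Ideal.torsionOf R R (w μ)) := by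
  classical
  set A := Ideal.torsionOf R R (w μ) with hAdef
  have hA : ∀ a : R, a ∈ A ↔ a * w μ = 0 := by
    intro a
    rw [hAdef, Ideal.mem_torsionOf_iff, smul_eq_mul]
  have hpow : ∀ n : ℕ, w μ ^ n ≠ 0 := by
    intro n hn
    exact hnil (mem_nilradical.2 ⟨n, hn⟩)
  have hAne : A ≠ ⊤ := by
    intro h
    have : (1 : R) ∈ A := h ▸ Submodule.mem_top
    rw [hA, one_mul] at this
    exact hpow 1 (by simpa using this)
  have hAleM : A ≤ IsLocalRing.maximalIdeal R := IsLocalRing.le_maximalIdeal hAne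
  set π := Ideal.Quotient.mk A with hπdef
  set t := π (w μ) with htdef
  haveI : Nontrivial (R ⧸ A) := Ideal.Quotient.nontrivial_iff.mpr hAne
  haveI : IsLocalRing (R ⧸ A) := IsLocalRing.of_surjective' π Ideal.Quotient.mk_surjective
  haveI := hpirμ
  haveI : IsNoetherianRing (R ⧸ A) := inferInstance
  -- powers of t are nonzero
  have htpow : ∀ n : ℕ, t ^ n ≠ 0 := by
    intro n hn
    rw [htdef, ← map_pow, Ideal.Quotient.eq_zero_iff_mem, hA, ← pow_succ] at hn
    exact hpow (n + 1) hn
  have ht0 : t ≠ 0 := by simpa using htpow 1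
  -- Pμ
  set Pμ : Ideal R := ⨆ l ∈ ({μ}ᶜ : Set Λ), Ideal.span {w l} with hPμdef
  have hPμA : Pμ ≤ A := by
    refine iSup₂_le fun l hl => ?_
    rw [Ideal.span_le, Set.singleton_subset_iff]
    exact (hA _).2 (hzero l μ hl)
  have hMle : IsLocalRing.maximalIdeal R ≤ Ideal.span {w μ} ⊔ Pμ := by
    rw [← hsup]
    refine iSup_le fun l => ?_
    by_cases hl : l = μ
    · subst hl; exact le_sup_left
    · exact le_sup_of_le_right (le_iSup₂ (f := fun l _ => Ideal.span {w l}) l hl)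
  -- image of maximal ideal is in span {t}
  have hMt : ∀ r : R, r ∈ IsLocalRing.maximalIdeal R → π r ∈ Ideal.span {t} := by
    intro r hr
    obtain ⟨y, hy, z, hz, rfl⟩ := Submodule.mem_sup.1 (hMle hr)
    obtain ⟨c, rfl⟩ := Ideal.mem_span_singleton'.1 hy
    have hz0 : π z = 0 := Ideal.Quotient.eq_zero_iff_mem.2 (hPμA hz)
    rw [map_add, hz0, add_zero, map_mul]
    exact Ideal.mem_span_singleton'.2 ⟨π c, rfl⟩
  -- t is not a unit
  have htnu : ¬ IsUnit t := by
    intro h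
    obtain ⟨v, hv⟩ := h.exists_left_inv
    obtain ⟨c, rfl⟩ := Ideal.Quotient.mk_surjective v
    rw [htdef, hπdef, ← map_mul, ← map_one (Ideal.Quotient.mk A), Ideal.Quotient.eq] at hv
    have h1 : (1 : R) ∈ IsLocalRing.maximalIdeal R := by
      have hcw : c * w μ ∈ IsLocalRing.maximalIdeal R := by
        rw [← hsup]
        exact Ideal.mul_mem_left _ c
          ((le_iSup (fun l => Ideal.span {w l}) μ) (Ideal.mem_span_singleton_self _))
      have := hAleM hv
      have : (1 : R) = c * w μ - (c * w μ - 1) := by ring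
      rw [this]
      exact Submodule.sub_mem _ hcw (hAleM hv)
    exact (IsLocalRing.maximalIdeal.isMaximal R).ne_top (Ideal.eq_top_of_isUnit_mem _ h1
      isUnit_one)
  have hspan_ne : Ideal.span {t} ≠ ⊤ := fun h => htnu (Ideal.span_singleton_eq_top.1 h)
  -- Krull intersection
  have hKrull : (⨅ n : ℕ, Ideal.span {t} ^ n) = ⊥ :=
    Ideal.iInf_pow_eq_bot_of_isLocalRing _ hspan_ne
  -- extraction lemma
  have hext : ∀ x : R ⧸ A, x ≠ 0 → ∃ (u : R ⧸ A) (n : ℕ), IsUnit u ∧ x = u * t ^ n := by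
    intro x hx
    have hnotall : ∃ n : ℕ, x ∉ Ideal.span {t} ^ n := by
      by_contra h
      push_neg at h
      have : x ∈ (⊥ : Ideal (R ⧸ A)) := by
        rw [← hKrull]; exact (Submodule.mem_iInf _).2 h
      exact hx (by simpa using this)
    have hspec : x ∉ Ideal.span {t} ^ (Nat.find hnotall) := Nat.find_spec hnotall
    have hnpos : Nat.find hnotall ≠ 0 := by
      intro h0
      rw [h0, pow_zero, Ideal.one_eq_top] at hspec
      exact hspec Submodule.mem_top
    obtain ⟨k, hk⟩ := Nat.exists_eq_succ_of_ne_zero hnpos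
    have hxk : x ∈ Ideal.span {t} ^ k := by
      by_contra h
      exact Nat.find_min hnotall (by omega) h
    rw [Ideal.span_singleton_pow] at hxk
    obtain ⟨u, hu⟩ := Ideal.mem_span_singleton'.1 hxk
    refine ⟨u, k, ?_, hu.symm⟩
    by_contra hnu
    -- u nonunit, lift to nonunit of R
    obtain ⟨r, rfl⟩ := Ideal.Quotient.mk_surjective u
    have hr : r ∈ IsLocalRing.maximalIdeal R := by
      rw [IsLocalRing.mem_maximalIdeal, mem_nonunits_iff]
      exact fun h => hnu (h.map _)
    obtain ⟨d, hd⟩ := Ideal.mem_span_singleton'.1 (hMt r hr)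
    apply hspec
    rw [hk, Ideal.span_singleton_pow, ← hu, ← hd]
    refine Ideal.mem_span_singleton'.2 ⟨d, ?_⟩
    rw [pow_succ]; ring
  -- domain
  haveI : IsDomain (R ⧸ A) := by
    haveI : NoZeroDivisors (R ⧸ A) := by
      constructor
      intro a b hab
      by_contra h
      push_neg at h
      obtain ⟨ha, hb⟩ := h
      obtain ⟨u, n, hu, rfl⟩ := hext a ha
      obtain ⟨v, m, hv, rfl⟩ := hext b hb
      have heq : (u * t ^ n) * (v * t ^ m) = (u * v) * t ^ (n + m) := by
        rw [pow_add]; ring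
      rw [heq] at hab
      exact htpow (n + m) (((hu.mul hv).mul_right_eq_zero).1 hab)
    exact NoZeroDivisors.to_isDomain _
  have hprime : A.IsPrime := (Ideal.Quotient.isDomain_iff_prime A).1 inferInstance
  -- A = Pμ
  have hAPμ : A = Pμ := by
    refine le_antisymm ?_ hPμA
    intro a ha
    rw [hA] at ha
    have hanu : a ∈ IsLocalRing.maximalIdeal R := by
      rw [IsLocalRing.mem_maximalIdeal, mem_nonunits_iff]
      intro hu
      exact hpow 1 (by simpa using hu.mul_right_eq_zero.1 ha)
    obtain ⟨y, hy, z, hz, rfl⟩ := Submodule.mem_sup.1 (hMle hanu)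
    obtain ⟨c, rfl⟩ := Ideal.mem_span_singleton'.1 hy
    have hzw : z * w μ = 0 := (hA z).1 (hPμA hz)
    have hcw : (c * w μ) * w μ = 0 := by
      have : (c * w μ + z) * w μ = 0 := ha
      rw [add_mul, hzw, add_zero] at this
      exact this
    have : π (c * w μ) = 0 := Ideal.Quotient.eq_zero_iff_mem.2 ((hA _).2 hcw)
    rw [map_mul] at this
    rcases mul_eq_zero.1 this with hc | ht
    · have : c ∈ A := Ideal.Quotient.eq_zero_iff_mem.1 hc
      rw [hA] at this
      rw [this, zero_add]
      exact hz
    · exact absurd ht ht0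
  refine ⟨hAPμ, hprime, ?_⟩
  -- primes avoiding w μ are ≤ A
  intro P hP hwP
  have hAP : A ≤ P := by
    intro a ha
    rw [hA] at ha
    exact (hP.mem_or_mem (ha ▸ P.zero_mem : a * w μ ∈ P)).resolve_right hwP
  intro x hx
  by_contra hxA
  have hx0 : π x ≠ 0 := fun h => hxA (Ideal.Quotient.eq_zero_iff_mem.1 h)
  obtain ⟨u, n, hu, hux⟩ := hext (π x) hx0
  rcases Nat.eq_zero_or_pos n with hn0 | hnpos
  · -- π x is a unit, contradiction with x ∈ P ≤ M
    rw [hn0, pow_zero, mul_one] at hux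
    have hxu : IsUnit (π x) := hux ▸ hu
    obtain ⟨v, hv⟩ := hxu.exists_left_inv
    obtain ⟨c, rfl⟩ := Ideal.Quotient.mk_surjective v
    rw [hπdef, ← map_mul, ← map_one (Ideal.Quotient.mk A), Ideal.Quotient.eq] at hv
    have hPM : P ≤ IsLocalRing.maximalIdeal R := IsLocalRing.le_maximalIdeal hP.ne_top
    have h1 : (1 : R) ∈ IsLocalRing.maximalIdeal R := by
      have : (1 : R) = c * x - (c * x - 1) := by ring
      rw [this]
      exact Submodule.sub_mem _ (hPM (Ideal.mul_mem_left _ c hx)) (hAleM hv)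
    exact (IsLocalRing.maximalIdeal.isMaximal R).ne_top
      (Ideal.eq_top_of_isUnit_mem _ h1 isUnit_one)
  · -- t ^ n ∈ image of P, so w μ ∈ P
    obtain ⟨uu, huu⟩ := hu
    obtain ⟨d, hd⟩ := Ideal.Quotient.mk_surjective (↑uu⁻¹ : R ⧸ A)
    have : π (d * x) = t ^ n := by
      rw [map_mul, hd, hux, ← huu, ← mul_assoc]
      simp
    rw [htdef, hπdef, ← map_pow, Ideal.Quotient.eq] at this
    have hwn : w μ ^ n ∈ P := by
      have hdx : d * x ∈ P := Ideal.mul_mem_left _ d hx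
      have : w μ ^ n = d * x - (d * x - w μ ^ n) := by ring
      rw [this]
      exact Submodule.sub_mem _ hdx (hAP ‹d * x - w μ ^ n ∈ A›)
    exact hwP (hP.mem_of_pow_mem n hwn)

theorem spec_description_of_local_ring_with_decomposition
    {R : Type} [CommRing R] [IsLocalRing R] {Λ : Type} [Nontrivial Λ]
    (w : Λ → R) (hmem : ∀ l, w l ∈ IsLocalRing.maximalIdeal R)
    (hindep : iSupIndep (fun l => Ideal.span {w l}))
    (hsup : (⨆ l, Ideal.span {w l}) = IsLocalRing.maximalIdeal R)
    (hpir : ∀ l, IsPrincipalIdealRing (R ⧸ Ideal.torsionOf R R (w l))) :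
    ∀ P : Ideal R, P.IsPrime ↔
      (P = IsLocalRing.maximalIdeal R ∨
        ∃ μ : Λ, w μ ∉ nilradical R ∧
          (⨆ l ∈ ({μ}ᶜ : Set Λ), Ideal.span {w l}) = P) := by
  classical
  have hzero : ∀ l m : Λ, l ≠ m → w l * w m = 0 := by
    intro l m hlm
    have h1 : w l * w m ∈ Ideal.span {w l} :=
      Ideal.mem_span_singleton'.2 ⟨w m, mul_comm _ _⟩
    have h2 : w l * w m ∈ ⨆ j, ⨆ (_ : j ≠ l), Ideal.span {w j} := by
      refine Submodule.mem_iSup_of_mem m (Submodule.mem_iSup_of_mem (Ne.symm hlm) ?_)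
      exact Ideal.mem_span_singleton'.2 ⟨w l, rfl⟩
    have := (hindep l).le_bot (Submodule.mem_inf.2 ⟨h1, h2⟩)
    simpa using this
  intro P
  constructor
  · intro hP
    by_cases hPM : P = IsLocalRing.maximalIdeal R
    · exact Or.inl hPM
    · right
      have hPle : P ≤ IsLocalRing.maximalIdeal R := IsLocalRing.le_maximalIdeal hP.ne_top
      have hexμ : ∃ μ, w μ ∉ P := by
        by_contra h
        push_neg at h
        apply hPM
        refine le_antisymm hPle ?_
        rw [← hsup]
        exact iSup_le fun l => (Ideal.span_le.2 (Set.singleton_subset_iff.2 (h l)))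
      obtain ⟨μ, hμ⟩ := hexμ
      have hnil : w μ ∉ nilradical R := fun h => hμ (nilradical_le_prime P h)
      obtain ⟨hAPμ, hprime, hle⟩ := aux_key w hsup hzero μ (hpir μ) hnil
      refine ⟨μ, hnil, ?_⟩
      refine le_antisymm ?_ (hAPμ ▸ hle P hP hμ)
      refine iSup₂_le fun l hl => Ideal.span_le.2 (Set.singleton_subset_iff.2 ?_)
      have : w l * w μ ∈ P := (hzero l μ hl) ▸ P.zero_mem
      exact (hP.mem_or_mem this).resolve_right hμ
  · rintro (rfl | ⟨μ, hnil, rfl⟩)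
    · exact (IsLocalRing.maximalIdeal.isMaximal R).isPrime
    · obtain ⟨hAPμ, hprime, _⟩ := aux_key w hsup hzero μ (hpir μ) hnil
      exact hAPμ ▸ hprime
end

section
/- Let (R, M) be a commutative local ring. Then R is Noetherian with every prime ideal a direct sum of cyclic R-modules if and only if there exist w_1, ..., w_n ∈ M with M = Rw_1 ⊕ ⋯ ⊕ Rw_n an internal direct sum and R/Ann(w_i) a principal ideal ring for each i. -/
open Ideal IsLocalRing

section Aux
variable {S : Type*} [CommRing S]

lemma pir_of_subsingleton [Subsingleton S] : IsPrincipalIdealRing S :=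
  ⟨fun I => ⟨0, by
    ext x
    constructor
    · intro _
      rw [show x = 0 from Subsingleton.elim x 0]
      exact Submodule.zero_mem _
    · intro _
      rw [show x = 0 from Subsingleton.elim x 0]
      exact I.zero_mem⟩⟩

lemma pir_of_noeth_local_principal_max [IsNoetherianRing S] [IsLocalRing S]
    {t : S} (ht : maximalIdeal S = Ideal.span {t}) : IsPrincipalIdealRing S := by
  constructor
  intro I
  by_cases hItop : I = ⊤
  · exact ⟨1, by rw [hItop, Ideal.submodule_span_eq, Ideal.span_singleton_one]⟩
  by_cases hbot : I = ⊥
  · exact ⟨0, by rw [hbot, Ideal.submodule_span_eq]; exact (Ideal.span_singleton_eq_bot.mpr rfl).symm⟩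
  have hIle : I ≤ Ideal.span {t} := ht ▸ le_maximalIdeal hItop
  have hKrull : ⨅ n : ℕ, (Ideal.span {t} : Ideal S) ^ n = ⊥ := by
    rw [← ht]
    exact Ideal.iInf_pow_eq_bot_of_isLocalRing _ (maximalIdeal.isMaximal S).ne_top
  have hex : ∃ k : ℕ, ¬ I ≤ Ideal.span {t} ^ k := by
    by_contra h
    push_neg at h
    exact hbot (le_bot_iff.mp (hKrull ▸ le_iInf h))
  classical
  have hk0pos : 0 < Nat.find hex := by
    rcases Nat.eq_zero_or_pos (Nat.find hex) with h | h
    case inr => exact h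
    exact absurd (by rw [pow_zero, Ideal.one_eq_top]; exact le_top) (h ▸ Nat.find_spec hex)
  set k := Nat.find hex - 1 with hk
  have hksucc : k + 1 = Nat.find hex := by omega
  have hIk : I ≤ Ideal.span {t} ^ k := by
    by_contra h
    have := Nat.find_min' hex h
    omega
  have hnot : ¬ I ≤ Ideal.span {t} ^ (k + 1) := hksucc ▸ Nat.find_spec hex
  rw [Ideal.span_singleton_pow] at hIk hnot
  obtain ⟨x, hxI, hxn⟩ := SetLike.not_le_iff_exists.mp hnot
  obtain ⟨a, rfl⟩ := Ideal.mem_span_singleton'.mp (hIk hxI)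
  have ha : IsUnit a := by
    by_contra h
    obtain ⟨b, rfl⟩ := Ideal.mem_span_singleton'.mp (ht ▸ (mem_maximalIdeal a).mpr h)
    exact hxn (Ideal.mem_span_singleton'.mpr ⟨b, by ring⟩)
  refine ⟨t ^ k, le_antisymm ?_ ?_⟩
  · exact hIk
  · rw [Ideal.submodule_span_eq, Ideal.span_singleton_le_iff_mem]
    obtain ⟨u, rfl⟩ := ha
    have : t ^ k = (↑u⁻¹ : S) * (↑u * t ^ k) := by
      rw [← mul_assoc, Units.inv_mul, one_mul]
    rw [this]
    exact I.mul_mem_left _ hxI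

lemma isNoetherian_quot_module (I : Ideal S) [IsNoetherianRing (S ⧸ I)] :
    IsNoetherian S (S ⧸ I) := by
  rw [isNoetherian_def]
  intro N
  have hsur : Function.Surjective (algebraMap S (S ⧸ I)) := by
    rw [Ideal.Quotient.algebraMap_eq]
    exact Ideal.Quotient.mk_surjective
  set N' : Ideal (S ⧸ I) := Submodule.span (S ⧸ I) (N : Set (S ⧸ I)) with hN'
  obtain ⟨T, hT⟩ := (isNoetherian_def.mp inferInstance N' : N'.FG)
  refine ⟨T, ?_⟩
  have h1 : (Submodule.span (S ⧸ I) (T : Set (S ⧸ I))).restrictScalars S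
      = Submodule.span S (T : Set (S ⧸ I)) := Submodule.restrictScalars_span S (S ⧸ I) hsur _
  have h2 : N'.restrictScalars S = Submodule.span S (N : Set (S ⧸ I)) :=
    Submodule.restrictScalars_span S (S ⧸ I) hsur _
  calc Submodule.span S (T : Set (S ⧸ I))
      = (Submodule.span (S ⧸ I) (T : Set (S ⧸ I))).restrictScalars S := h1.symm
    _ = N'.restrictScalars S := by rw [hT]
    _ = Submodule.span S (N : Set (S ⧸ I)) := h2
    _ = N := Submodule.span_eq N

lemma principal_of_le_span_singleton {w : S}
    (hpir : IsPrincipalIdealRing (S ⧸ Ideal.torsionOf S S w)) {I : Ideal S}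
    (hI : I ≤ Ideal.span {w}) : ∃ v ∈ I, I = Ideal.span {v} := by
  set A := Ideal.torsionOf S S w with hA
  set J : Ideal S := Submodule.comap (LinearMap.toSpanSingleton S S w) I with hJ
  have hmemJ : ∀ r : S, r ∈ J ↔ r * w ∈ I := by
    intro r
    rw [hJ, Submodule.mem_comap, LinearMap.toSpanSingleton_apply, smul_eq_mul]
  have hAJ : A ≤ J := by
    intro a haA
    rw [hmemJ, ← smul_eq_mul, (Ideal.mem_torsionOf_iff w a).mp haA]
    exact I.zero_mem
  obtain ⟨a0, ha0⟩ := hpir.principal (J.map (Ideal.Quotient.mk A))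
  rw [Ideal.submodule_span_eq] at ha0
  obtain ⟨a, rfl⟩ := Ideal.Quotient.mk_surjective a0
  have haJ : a ∈ J := by
    have : Ideal.Quotient.mk A a ∈ J.map (Ideal.Quotient.mk A) := ha0 ▸ Ideal.mem_span_singleton_self _
    obtain ⟨b, hbJ, hba⟩ := (Ideal.mem_map_iff_of_surjective (Ideal.Quotient.mk A) Ideal.Quotient.mk_surjective).mp this
    have : a - b ∈ A := by
      rw [hA, ← Ideal.Quotient.eq_zero_iff_mem (I := Ideal.torsionOf S S w)]
      rw [_root_.map_sub, hba, sub_self]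
    have := J.add_mem hbJ (hAJ this)
    simpa using this
  refine ⟨a * w, (hmemJ a).mp haJ, le_antisymm ?_ ?_⟩
  · intro x hxI
    obtain ⟨r, rfl⟩ := Ideal.mem_span_singleton'.mp (hI hxI)
    have hrJ : r ∈ J := (hmemJ r).mpr hxI
    have : Ideal.Quotient.mk A r ∈ Ideal.span {Ideal.Quotient.mk A a} :=
      ha0 ▸ Ideal.mem_map_of_mem (Ideal.Quotient.mk A) hrJ
    obtain ⟨c0, hc0⟩ := Ideal.mem_span_singleton'.mp this
    obtain ⟨c, rfl⟩ := Ideal.Quotient.mk_surjective c0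
    have : c * a - r ∈ A := by
      rw [hA, ← Ideal.Quotient.eq_zero_iff_mem (I := Ideal.torsionOf S S w)]
      rw [_root_.map_sub, _root_.map_mul, hc0, sub_self]
    have hz : (c * a - r) * w = 0 := by
      have := (Ideal.mem_torsionOf_iff w _).mp this
      simpa [smul_eq_mul] using this
    have : r * w = c * (a * w) := by
      have : c * a * w - r * w = 0 := by rw [← sub_mul, hz]
      linear_combination -this
    rw [this]
    exact Ideal.mem_span_singleton'.mpr ⟨c, rfl⟩
  · rw [Ideal.span_singleton_le_iff_mem]
    exact (hmemJ a).mp haJ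

lemma prod_eq_zero_of_indep {ι : Type*} {w : ι → S}
    (h : iSupIndep fun i => Ideal.span {w i}) {i j : ι} (hij : i ≠ j) : w i * w j = 0 := by
  have h1 : w i * w j ∈ Ideal.span {w i} :=
    Ideal.mul_mem_right _ _ (Ideal.mem_span_singleton_self _)
  have h2 : w i * w j ∈ Ideal.span {w j} := by
    rw [mul_comm]
    exact Ideal.mul_mem_right _ _ (Ideal.mem_span_singleton_self _)
  have h3 : (Ideal.span {w j} : Ideal S) ≤ ⨆ k, ⨆ (_ : k ≠ i), Ideal.span {w k} :=
    le_iSup_of_le j (le_iSup_of_le hij.symm le_rfl)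
  exact Submodule.disjoint_def.mp (h i) _ h1 (h3 h2)


lemma pir_component {R : Type} [CommRing R] [IsLocalRing R]
    [IsNoetherianRing R] {n : ℕ} {w : Fin n → R} (hmem : ∀ i, w i ∈ maximalIdeal R)
    (hindep : iSupIndep fun i => Ideal.span {w i})
    (hsup : (⨆ i, Ideal.span {w i}) = maximalIdeal R) (i : Fin n) :
    IsPrincipalIdealRing (R ⧸ Ideal.torsionOf R R (w i)) := by
  by_cases hv : w i = 0
  · haveI : Subsingleton (R ⧸ Ideal.torsionOf R R (w i)) := by
      constructor
      intro x y
      obtain ⟨x, rfl⟩ := Ideal.Quotient.mk_surjective x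
      obtain ⟨y, rfl⟩ := Ideal.Quotient.mk_surjective y
      rw [Ideal.Quotient.eq, (Ideal.torsionOf_eq_top_iff R (w i)).mpr hv]
      exact Submodule.mem_top
    exact pir_of_subsingleton
  · set A := Ideal.torsionOf R R (w i) with hA
    have hAtop : A ≠ ⊤ := fun h => hv ((Ideal.torsionOf_eq_top_iff R (w i)).mp h)
    haveI : Nontrivial (R ⧸ A) := Ideal.Quotient.nontrivial_iff.mpr hAtop
    haveI : IsLocalRing (R ⧸ A) :=
      IsLocalRing.of_surjective' (Ideal.Quotient.mk A) Ideal.Quotient.mk_surjective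
    have hmkw : Ideal.Quotient.mk A (w i) ∈ maximalIdeal (R ⧸ A) := by
      rw [mem_maximalIdeal]
      intro hu
      obtain ⟨c0, hc⟩ := isUnit_iff_exists_inv.mp hu
      obtain ⟨c, rfl⟩ := Ideal.Quotient.mk_surjective c0
      have h1 : w i * c - 1 ∈ A := by
        rw [← Ideal.Quotient.eq_zero_iff_mem (I := A), _root_.map_sub, _root_.map_mul,
          _root_.map_one, hc, sub_self]
      have h2 : (w i * c - 1) * w i = 0 := by
        have := (Ideal.mem_torsionOf_iff (w i) _).mp (hA ▸ h1)
        simpa [smul_eq_mul] using this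
      have h3 : w i * (1 - c * w i) = 0 := by linear_combination -h2
      have h4 : IsUnit (1 - c * w i) :=
        isUnit_one_sub_self_of_mem_nonunits _
          ((mem_maximalIdeal _).mp (Ideal.mul_mem_left _ c (hmem i)))
      obtain ⟨u, hu'⟩ := h4
      apply hv
      calc w i = w i * (1 - c * w i) * (↑u⁻¹ : R) := by
            rw [← hu', mul_assoc, Units.mul_inv, mul_one]
        _ = 0 := by rw [h3, zero_mul]
    apply pir_of_noeth_local_principal_max (t := Ideal.Quotient.mk A (w i))
    apply le_antisymm
    · intro x hx
      obtain ⟨x', rfl⟩ := Ideal.Quotient.mk_surjective x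
      have hx' : x' ∈ maximalIdeal R := by
        rw [mem_maximalIdeal] at hx ⊢
        intro hu
        exact hx (hu.map (Ideal.Quotient.mk A))
      rw [← hsup] at hx'
      have hle : (⨆ j, Ideal.span {w j} : Ideal R) ≤ Ideal.span {w i} ⊔ A := by
        refine iSup_le fun j => ?_
        by_cases hj : j = i
        · subst hj; exact le_sup_left
        · refine le_sup_of_le_right ?_
          rw [Ideal.span_singleton_le_iff_mem, hA, Ideal.mem_torsionOf_iff, smul_eq_mul]
          exact prod_eq_zero_of_indep hindep hj
      obtain ⟨p, hp, q, hq, hpq⟩ := Submodule.mem_sup.mp (hle hx')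
      obtain ⟨r, rfl⟩ := Ideal.mem_span_singleton'.mp hp
      rw [← hpq, _root_.map_add, Ideal.Quotient.eq_zero_iff_mem.mpr hq, add_zero,
        _root_.map_mul]
      exact Ideal.mem_span_singleton'.mpr ⟨_, rfl⟩
    · rw [Ideal.span_singleton_le_iff_mem]
      exact hmkw

end Aux

theorem noetherian_primes_direct_sum_iff_decomposition
    {R : Type} [CommRing R] [IsLocalRing R] :
    (IsNoetherianRing R ∧ ∀ P : Ideal R, P.IsPrime → IsDirectSumOfCyclics P) ↔
      ∃ (n : ℕ) (w : Fin n → R), (∀ i, w i ∈ IsLocalRing.maximalIdeal R) ∧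
        iSupIndep (fun i => Ideal.span {w i}) ∧
        (⨆ i, Ideal.span {w i}) = IsLocalRing.maximalIdeal R ∧
        ∀ i, IsPrincipalIdealRing (R ⧸ Ideal.torsionOf R R (w i)) := by
  constructor
  · rintro ⟨hNoeth, hprimes⟩
    obtain ⟨ι, w, hmem, hindep, hsup⟩ := hprimes _ ((maximalIdeal.isMaximal R).isPrime)
    classical
    obtain ⟨s, hs⟩ : (maximalIdeal R).FG := isNoetherian_def.mp hNoeth _
    have hfin : ∀ x : s, ∃ fs : Finset ι, (x : R) ∈ ⨆ i ∈ fs, Ideal.span {w i} := by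
      intro x
      refine Submodule.mem_iSup_iff_exists_finset.mp ?_
      rw [hsup, ← hs]
      exact Ideal.subset_span x.2
    choose F hF using hfin
    set fs : Finset ι := s.attach.biUnion F with hfs
    have hMle : maximalIdeal R ≤ ⨆ i ∈ fs, Ideal.span {w i} := by
      rw [← hs, Ideal.span_le]
      intro x hx
      refine (iSup₂_le (fun i hi => ?_) : (⨆ i ∈ F ⟨x, hx⟩, Ideal.span {w i}) ≤ _) (hF ⟨x, hx⟩)
      exact le_iSup₂_of_le i (Finset.mem_biUnion.mpr ⟨⟨x, hx⟩, s.mem_attach _, hi⟩) le_rfl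
    set w' : Fin fs.card → R := fun k => w (fs.equivFin.symm k) with hw'
    have hindep' : iSupIndep fun k => Ideal.span {w' k} :=
      hindep.comp (Subtype.val_injective.comp fs.equivFin.symm.injective)
    have hsup' : (⨆ k, Ideal.span {w' k}) = maximalIdeal R := by
      apply le_antisymm
      · exact iSup_le fun k => (Ideal.span_singleton_le_iff_mem _).mpr (hmem _)
      · refine hMle.trans (iSup₂_le fun i hi => ?_)
        refine le_iSup_of_le (fs.equivFin ⟨i, hi⟩) ?_
        rw [hw']
        simp
    exact ⟨fs.card, w', fun k => hmem _, hindep',  hsup',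
      fun k => pir_component (fun k => hmem _) hindep' hsup' k⟩
  · rintro ⟨n, w, hmem, hindep, hsup, hPIR⟩
    classical
    have hNspan : ∀ i : Fin n, IsNoetherian R ↥(Ideal.span {w i} : Ideal R) := by
      intro i
      haveI := hPIR i
      haveI : IsNoetherianRing (R ⧸ Ideal.torsionOf R R (w i)) :=
        PrincipalIdealRing.isNoetherianRing
      haveI := isNoetherian_quot_module (Ideal.torsionOf R R (w i))
      exact isNoetherian_of_linearEquiv (Ideal.quotTorsionOfEquivSpanSingleton R R (w i))
    have hNoeth : IsNoetherianRing R := by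
      haveI : ∀ i : Fin n, IsNoetherian R ↥((fun i => (Ideal.span {w i} : Ideal R)) i) := hNspan
      have hM : IsNoetherian R ↥(⨆ i, (Ideal.span {w i} : Ideal R)) := isNoetherian_iSup
      rw [hsup] at hM
      haveI := hM
      haveI : IsNoetherianRing (R ⧸ maximalIdeal R) := by
        rw [isNoetherianRing_iff, isNoetherian_def]
        intro I
        have hI : I = Ideal.map (Ideal.Quotient.mk (maximalIdeal R))
            (Ideal.comap (Ideal.Quotient.mk (maximalIdeal R)) I) :=
          (Ideal.map_comap_of_surjective _ Ideal.Quotient.mk_surjective I).symm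
        by_cases h : Ideal.comap (Ideal.Quotient.mk (maximalIdeal R)) I = ⊤
        · rw [hI, h, Ideal.map_top]
          exact ⟨{1}, by simp [Ideal.span_singleton_one]⟩
        · have heq := (maximalIdeal.isMaximal R).eq_of_le h (fun x hx => by
            rw [Ideal.mem_comap, Ideal.Quotient.eq_zero_iff_mem.mpr hx]; exact I.zero_mem)
          rw [hI, ← heq, Ideal.map_quotient_self]
          exact ⟨∅, by simp⟩
      haveI : IsNoetherian R (R ⧸ (maximalIdeal R : Ideal R)) :=
        isNoetherian_quot_module (maximalIdeal R)
      exact isNoetherian_of_range_eq_ker (maximalIdeal R).subtype (maximalIdeal R).mkQ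
        (by rw [Submodule.range_subtype, Submodule.ker_mkQ])
    refine ⟨hNoeth, fun P hP => ?_⟩
    by_cases hall : ∀ j, w j ∈ P
    · have hPM : P = maximalIdeal R := by
        apply le_antisymm (le_maximalIdeal hP.ne_top)
        rw [← hsup]
        exact iSup_le fun j => (Ideal.span_singleton_le_iff_mem _).mpr (hall j)
      exact ⟨Fin n, w, hall, hindep, hPM ▸ hsup⟩
    · push_neg at hall
      obtain ⟨i₀, hi₀⟩ := hall
      have hjP : ∀ j, j ≠ i₀ → w j ∈ P := by
        intro j hj
        refine (hP.mem_or_mem ?_).resolve_right hi₀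
        rw [prod_eq_zero_of_indep hindep hj]
        exact P.zero_mem
      obtain ⟨v, hvI, hveq⟩ :=
        principal_of_le_span_singleton (hPIR i₀) (I := P ⊓ Ideal.span {w i₀}) inf_le_right
      set w2 : Fin n → R := Function.update w i₀ v with hw2
      have hw2at : w2 i₀ = v := by rw [hw2]; exact Function.update_self _ _ _
      have hw2ne : ∀ j, j ≠ i₀ → w2 j = w j := fun j hj => by
        rw [hw2]; exact Function.update_of_ne hj _ _
      have hw2mem : ∀ j, w2 j ∈ P := by
        intro j
        by_cases hj : j = i₀
        · subst hj
          rw [hw2, Function.update_self]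
          exact (Submodule.mem_inf.mp hvI).1
        · rw [hw2, Function.update_of_ne hj]
          exact hjP j hj
      have hle : ∀ j, (Ideal.span {w2 j} : Ideal R) ≤ Ideal.span {w j} := by
        intro j
        by_cases hj : j = i₀
        · subst hj
          rw [hw2, Function.update_self, ← hveq]
          exact inf_le_right
        · rw [hw2, Function.update_of_ne hj]
      refine ⟨Fin n, w2, hw2mem, hindep.mono hle, le_antisymm
        (iSup_le fun j => (Ideal.span_singleton_le_iff_mem _).mpr (hw2mem j)) ?_⟩
      intro x hx
      have hxM : x ∈ Ideal.span (Set.range w) := by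
        rw [Ideal.submodule_span_eq.symm, Submodule.span_range_eq_iSup]
        have : x ∈ maximalIdeal R := le_maximalIdeal hP.ne_top hx
        rw [← hsup] at this
        exact this
      obtain ⟨c, hc⟩ := Ideal.mem_span_range_iff_exists_fun.mp hxM
      have hterm : ∀ j, c j * w j ∈ ⨆ k, (Ideal.span {w2 k} : Ideal R) := by
        intro j
        by_cases hj : j = i₀
        · subst hj
          have h1 : c j * w j ∈ P := by
            have hrest : ∀ k ∈ Finset.univ.erase j, c k * w k ∈ P := by
              intro k hk
              exact P.mul_mem_left _ (hjP k (Finset.ne_of_mem_erase hk))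
            have hsum : ∑ k ∈ Finset.univ.erase j, c k * w k ∈ P :=
              Submodule.sum_mem _ hrest
            have : c j * w j = x - ∑ k ∈ Finset.univ.erase j, c k * w k := by
              rw [← hc, ← Finset.add_sum_erase _ _ (Finset.mem_univ j)]
              ring
            rw [this]
            exact P.sub_mem hx hsum
          have h2 : c j * w j ∈ Ideal.span {w j} :=
            Ideal.mul_mem_left _ _ (Ideal.mem_span_singleton_self _)
          have h3 : c j * w j ∈ Ideal.span {v} := by
            rw [← hveq]
            exact Submodule.mem_inf.mpr ⟨h1, h2⟩
          refine Submodule.mem_iSup_of_mem j ?_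
          simp only [hw2at]
          exact h3
        · refine le_iSup (fun k => (Ideal.span {w2 k} : Ideal R)) j ?_
          simp only [hw2ne j hj]
          exact Ideal.mul_mem_left _ _ (Ideal.mem_span_singleton_self _)
      rw [← hc]
      exact Submodule.sum_mem _ fun j _ => hterm j
end
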